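/- arXiv:1703.01672 — 10 statements merged into one kernel-verified Lean document; each statement's English description precedes it below -/
import Mathlib

section
/- For every probability distribution p_1 ≥ p_2 ≥ ⋯ ≥ p_N ≥ 0 on {1,…,N} and every lying probability 0 ≤ p ≤ 1/2, the zigzag query is almost optimal: G_ZZ(X) ≤ G_opt(X) + (1/4)·(1−2p). -/
open Finset

noncomputable def guess (N : ℕ) (q : Fin N → ℝ) : ℝ :=
  Finset.univ.inf' ⟨1, Finset.mem_univ 1⟩
    (fun σ : Equiv.Perm (Fin N) => ∑ k : Fin N, ((k : ℝ) + 1) * q (σ k))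

noncomputable def guessA (N : ℕ) (q : Fin N → ℝ) (p : ℝ) (A : Finset (Fin N)) : ℝ :=
  ∑ y : Bool, Finset.univ.inf' ⟨1, Finset.mem_univ 1⟩
    (fun σ : Equiv.Perm (Fin N) => ∑ k : Fin N,
      ((k : ℝ) + 1) * q (σ k) * (if ((σ k ∈ A) ↔ (y = true)) then 1 - p else p))

noncomputable def guessOpt (N : ℕ) (q : Fin N → ℝ) (p : ℝ) : ℝ :=
  Finset.univ.inf' ⟨∅, Finset.mem_univ ∅⟩ (fun A : Finset (Fin N) => guessA N q p A)

def zigzag (N : ℕ) : Finset (Fin N) := Finset.univ.filter (fun k => (k : ℕ) % 2 = 0)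

noncomputable def wt (N : ℕ) (q : Fin N → ℝ) (p : ℝ) (i j : Fin N) : ℝ :=
  max 0 ((1 - p) * min (q i) (q j) - p * max (q i) (q j))

noncomputable def cut (N : ℕ) (q : Fin N → ℝ) (p : ℝ) (A : Finset (Fin N)) : ℝ :=
  ∑ i ∈ A, ∑ j ∈ Aᶜ, wt N q p i j

noncomputable def maxcut (N : ℕ) (q : Fin N → ℝ) (p : ℝ) : ℝ :=
  Finset.univ.sup' ⟨∅, Finset.mem_univ ∅⟩ (fun A : Finset (Fin N) => cut N q p A)

/-
After the answer `y` to the query `A`, the best guessing order sorts the weights `q i * r_A(i, y)`,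
and the cost of a sorted list `b` is `(∑ b + ∑ᵢ ∑ⱼ min bᵢ bⱼ) / 2`. Summing over both answers gives
`G_A = (∑ q + ∑ᵢ ∑ⱼ min qᵢ qⱼ) / 2 - cut A`, where `cut A` adds up `wt i j` over the pairs separated
by `A`, and `wt i j` is the length of the overlap of the intervals `[p qᵢ, (1 - p) qᵢ]` and
`[p qⱼ, (1 - p) qⱼ]`. Hence `cut A = ∫ #(A ∩ Sₜ) * #(Aᶜ ∩ Sₜ) dt` with
`Sₜ = {i | p qᵢ ≤ t ≤ (1 - p) qᵢ}`. As `q` is sorted, every `Sₜ` is an interval of indices, which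
the alternating set splits as evenly as possible. So the zigzag maximises every integrand, and in
fact `G_ZZ = G_opt`.
-/

section Guessing

variable {N : ℕ}

lemma sum_sum_apply_max (b : Fin N → ℝ) :
    ∑ j, ∑ k, b (max j k) = ∑ k : Fin N, (2 * (k : ℝ) + 1) * b k := by
  have hsplit : ∀ j k : Fin N,
      b (max j k) = (if k ≤ j then b j else 0) + (if j < k then b k else 0) := by
    intro j k
    rcases le_or_gt k j with h | h
    · simp [h, not_lt.2 h]
    · simp [h, not_le.2 h, max_eq_right h.le]
  have hlow : ∀ j : Fin N, ∑ k, (if k ≤ j then b j else 0) = ((j : ℝ) + 1) * b j := by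
    intro j
    simp [← sum_filter, filter_ge_eq_Iic]
  have hhigh : ∑ j : Fin N, ∑ k, (if j < k then b k else 0) = ∑ k : Fin N, (k : ℝ) * b k := by
    rw [sum_comm]
    simp [← sum_filter, filter_gt_eq_Iio]
  simp only [hsplit, sum_add_distrib, hlow, hhigh]
  rw [← sum_add_distrib]
  exact sum_congr rfl fun k _ => by ring

lemma sum_sum_min_le (b : Fin N → ℝ) :
    ∑ j, ∑ k, min (b j) (b k) ≤ ∑ k : Fin N, (2 * (k : ℝ) + 1) * b k := by
  rw [← sum_sum_apply_max]
  gcongr with j _ k _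
  rcases max_choice j k with h | h <;> rw [h]
  exacts [min_le_left _ _, min_le_right _ _]

lemma Antitone.sum_sum_min_eq {b : Fin N → ℝ} (hb : Antitone b) :
    ∑ j, ∑ k, min (b j) (b k) = ∑ k : Fin N, (2 * (k : ℝ) + 1) * b k := by
  simp only [← hb.map_max, sum_sum_apply_max]

lemma exists_perm_antitone_comp {α : Type*} [LinearOrder α] (a : Fin N → α) :
    ∃ σ : Equiv.Perm (Fin N), Antitone (a ∘ σ) :=
  ⟨Fin.revPerm.trans (Tuple.sort a), fun i j hij => by
    simpa using Tuple.monotone_sort a (Fin.rev_le_rev.2 hij)⟩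

lemma sum_sum_min_comp_perm (a : Fin N → ℝ) (σ : Equiv.Perm (Fin N)) :
    ∑ j, ∑ k, min (a (σ j)) (a (σ k)) = ∑ i, ∑ j, min (a i) (a j) := by
  rw [Equiv.sum_comp σ (fun j => ∑ k, min (a j) (a (σ k)))]
  exact sum_congr rfl fun i _ => Equiv.sum_comp σ (fun k => min (a i) (a k))

lemma two_mul_guess (a : Fin N → ℝ) :
    2 * guess N a = ∑ i, a i + ∑ i, ∑ j, min (a i) (a j) := by
  have hcost : ∀ σ : Equiv.Perm (Fin N), 2 * ∑ k : Fin N, ((k : ℝ) + 1) * a (σ k)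
      = ∑ i, a i + ∑ k : Fin N, (2 * (k : ℝ) + 1) * a (σ k) := by
    intro σ
    rw [← Equiv.sum_comp σ a, mul_sum, ← sum_add_distrib]
    exact sum_congr rfl fun k _ => by ring
  obtain ⟨σ₀, hσ₀⟩ := exists_perm_antitone_comp a
  apply le_antisymm
  · calc 2 * guess N a ≤ 2 * ∑ k : Fin N, ((k : ℝ) + 1) * a (σ₀ k) := by
          gcongr; exact inf'_le _ (mem_univ σ₀)
      _ = ∑ i, a i + ∑ i, ∑ j, min (a i) (a j) := by
          rw [hcost, ← sum_sum_min_comp_perm a σ₀]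
          exact congrArg _ (hσ₀.sum_sum_min_eq).symm
  · obtain ⟨σ, -, hσ⟩ := exists_mem_eq_inf' (univ_nonempty (α := Equiv.Perm (Fin N)))
      (fun σ : Equiv.Perm (Fin N) => ∑ k : Fin N, ((k : ℝ) + 1) * a (σ k))
    rw [guess, hσ, hcost, ← sum_sum_min_comp_perm a σ]
    exact add_le_add_right (sum_sum_min_le (a ∘ σ)) _

end Guessing

section Query

variable {N : ℕ}

-- `r_A(i, y)`: the probability of the answer `y` to the query `A` when the secret is `i`.
def answerProb (A : Finset (Fin N)) (p : ℝ) (i : Fin N) (y : Bool) : ℝ :=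
  if (i ∈ A ↔ y = true) then 1 - p else p

lemma answerProb_true (A : Finset (Fin N)) (p : ℝ) (i : Fin N) :
    answerProb A p i true = if i ∈ A then 1 - p else p := by
  simp [answerProb]

lemma answerProb_false (A : Finset (Fin N)) (p : ℝ) (i : Fin N) :
    answerProb A p i false = if i ∈ A then p else 1 - p := by
  simp [answerProb]

lemma answerProb_true_add_false (A : Finset (Fin N)) (p : ℝ) (i : Fin N) :
    answerProb A p i true + answerProb A p i false = 1 := by
  rw [answerProb_true, answerProb_false]
  split_ifs <;> ring

lemma guessA_eq_sum_guess (q : Fin N → ℝ) (p : ℝ) (A : Finset (Fin N)) :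
    guessA N q p A = ∑ y, guess N (fun i => q i * answerProb A p i y) := by
  simp only [guessA, guess, answerProb, mul_assoc]

lemma min_mul_add_min_mul_swap {a b p : ℝ} (ha : 0 ≤ a) (hb : 0 ≤ b) (hp0 : 0 ≤ p)
    (hp : p ≤ 1 / 2) :
    min (a * (1 - p)) (b * p) + min (a * p) (b * (1 - p))
      = min a b - max 0 ((1 - p) * min a b - p * max a b) := by
  wlog hab : a ≤ b generalizing a b
  · simpa only [add_comm, min_comm, max_comm] using this hb ha (le_of_not_ge hab)
  rw [min_eq_left hab, max_eq_right hab,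
    min_eq_left (a := a * p) (by nlinarith)]
  rcases le_total (a * (1 - p)) (b * p) with h | h
  · rw [min_eq_left h, max_eq_left (by nlinarith)]; ring
  · rw [min_eq_right h, max_eq_right (by nlinarith)]; ring

lemma wt_comm (q : Fin N → ℝ) (p : ℝ) (i j : Fin N) : wt N q p i j = wt N q p j i := by
  rw [wt, wt, min_comm (q i), max_comm (q i)]

lemma sum_bool_min_mul_answerProb {q : Fin N → ℝ} (hnn : ∀ i, 0 ≤ q i) {p : ℝ} (hp0 : 0 ≤ p)
    (hp : p ≤ 1 / 2) (A : Finset (Fin N)) (i j : Fin N) :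
    ∑ y, min (q i * answerProb A p i y) (q j * answerProb A p j y)
      = min (q i) (q j) - if (i ∈ A ↔ j ∈ A) then 0 else wt N q p i j := by
  have h1p : 0 ≤ 1 - p := by linarith
  rw [Fintype.sum_bool, answerProb_true, answerProb_true, answerProb_false, answerProb_false]
  by_cases hi : i ∈ A <;> by_cases hj : j ∈ A <;>
    simp only [hi, hj, if_true, if_false, iff_self, iff_true, iff_false, not_true_eq_false]
  · rw [← min_mul_of_nonneg _ _ h1p, ← min_mul_of_nonneg _ _ hp0]
    ring
  · exact min_mul_add_min_mul_swap (hnn i) (hnn j) hp0 hp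
  · rw [add_comm]
    exact min_mul_add_min_mul_swap (hnn i) (hnn j) hp0 hp
  · rw [← min_mul_of_nonneg _ _ h1p, ← min_mul_of_nonneg _ _ hp0]
    ring

lemma sum_sum_ite_iff_mem {ι M : Type*} [Fintype ι] [DecidableEq ι] [AddCommMonoid M]
    (A : Finset ι) (f : ι → ι → M) :
    ∑ i, ∑ j, (if (i ∈ A ↔ j ∈ A) then 0 else f i j)
      = ∑ i ∈ A, ∑ j ∈ Aᶜ, f i j + ∑ i ∈ Aᶜ, ∑ j ∈ A, f i j := by
  rw [← sum_add_sum_compl A]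
  congr 1 <;> refine sum_congr rfl fun i hi => ?_ <;> rw [← sum_add_sum_compl A]
  · rw [sum_eq_zero fun j hj => if_pos (iff_of_true hi hj), zero_add]
    exact sum_congr rfl fun j hj => if_neg fun h => mem_compl.1 hj (h.1 hi)
  · rw [sum_eq_zero (s := Aᶜ) fun j hj => if_pos (iff_of_false (mem_compl.1 hi) (mem_compl.1 hj)),
      add_zero]
    exact sum_congr rfl fun j hj => if_neg fun h => mem_compl.1 hi (h.2 hj)

lemma sum_sum_ite_iff_mem_wt (q : Fin N → ℝ) (p : ℝ) (A : Finset (Fin N)) :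
    ∑ i, ∑ j, (if (i ∈ A ↔ j ∈ A) then 0 else wt N q p i j) = 2 * cut N q p A := by
  have hback : ∑ i ∈ Aᶜ, ∑ j ∈ A, wt N q p i j = cut N q p A := by
    rw [sum_comm, cut]
    exact sum_congr rfl fun i _ => sum_congr rfl fun j _ => wt_comm q p j i
  rw [sum_sum_ite_iff_mem, hback]
  exact (two_mul _).symm

lemma guessA_eq {q : Fin N → ℝ} (hnn : ∀ i, 0 ≤ q i) {p : ℝ} (hp0 : 0 ≤ p) (hp : p ≤ 1 / 2)
    (A : Finset (Fin N)) :
    guessA N q p A = (∑ i, q i + ∑ i, ∑ j, min (q i) (q j)) / 2 - cut N q p A := by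
  set a : Bool → Fin N → ℝ := fun y i => q i * answerProb A p i y
  have hmass : ∀ i, ∑ y, a y i = q i := fun i => by
    rw [Fintype.sum_bool, ← mul_add, answerProb_true_add_false, mul_one]
  have htwice : 2 * guessA N q p A
      = ∑ i, q i + ∑ i, ∑ j, min (q i) (q j) - 2 * cut N q p A := calc
    _ = ∑ y, (∑ i, a y i + ∑ i, ∑ j, min (a y i) (a y j)) := by
      rw [guessA_eq_sum_guess, mul_sum]
      simp only [two_mul_guess]
      rfl
    _ = ∑ i, ∑ y, a y i + ∑ i, ∑ j, ∑ y, min (a y i) (a y j) := by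
      rw [sum_add_distrib, sum_comm, sum_comm (s := univ (α := Bool))]
      simp only [sum_comm (s := univ (α := Bool)) (t := univ (α := Fin N))]
    _ = ∑ i, q i + ∑ i, ∑ j, (min (q i) (q j) - if (i ∈ A ↔ j ∈ A) then 0 else wt N q p i j) := by
      simp only [a, hmass, sum_bool_min_mul_answerProb hnn hp0 hp]
    _ = _ := by
      simp only [sum_sub_distrib, sum_sum_ite_iff_mem_wt, add_sub_assoc]
  linarith

end Query

section LayerCake

open MeasureTheory
open scoped ENNReal

variable {α ι : Type*} {I : ι → Set α}

lemma integrable_indicator_one_inter [MeasurableSpace α] {μ : Measure α}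
    (hI : ∀ i, MeasurableSet (I i)) (hfin : ∀ i, μ (I i) ≠ ∞) (i j : ι) :
    Integrable ((I i ∩ I j).indicator (1 : α → ℝ)) μ :=
  (integrable_indicator_iff ((hI i).inter (hI j))).2
    (integrableOn_const (measure_inter_lt_top_of_left_ne_top (hfin i)).ne)

variable [∀ i x, Decidable (x ∈ I i)]

lemma card_filter_mul_card_filter_eq_sum_sum_indicator (s t : Finset ι) (x : α) :
    (#{i ∈ s | x ∈ I i} * #{j ∈ t | x ∈ I j} : ℝ)
      = ∑ i ∈ s, ∑ j ∈ t, (I i ∩ I j).indicator 1 x := by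
  rw [← sum_boole, ← sum_boole, sum_mul_sum]
  simp only [ite_zero_mul_ite_zero, mul_one, Set.indicator_apply, Set.mem_inter_iff,
    Pi.one_apply]

variable [MeasurableSpace α] {μ : Measure α}

lemma integrable_card_filter_mul_card_filter (hI : ∀ i, MeasurableSet (I i))
    (hfin : ∀ i, μ (I i) ≠ ∞) (s t : Finset ι) :
    Integrable (fun x => (#{i ∈ s | x ∈ I i} * #{j ∈ t | x ∈ I j} : ℝ)) μ := by
  simp only [card_filter_mul_card_filter_eq_sum_sum_indicator]
  exact integrable_finsetSum _ fun i _ => integrable_finsetSum _ fun j _ =>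
    integrable_indicator_one_inter hI hfin i j

lemma integral_card_filter_mul_card_filter (hI : ∀ i, MeasurableSet (I i))
    (hfin : ∀ i, μ (I i) ≠ ∞) (s t : Finset ι) :
    ∫ x, (#{i ∈ s | x ∈ I i} * #{j ∈ t | x ∈ I j} : ℝ) ∂μ
      = ∑ i ∈ s, ∑ j ∈ t, μ.real (I i ∩ I j) := by
  have hint := integrable_indicator_one_inter hI hfin
  simp only [card_filter_mul_card_filter_eq_sum_sum_indicator]
  rw [integral_finsetSum _ fun i _ => integrable_finsetSum _ fun j _ => hint i j]
  refine sum_congr rfl fun i _ => ?_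
  rw [integral_finsetSum _ fun j _ => hint i j]
  exact sum_congr rfl fun j _ => integral_indicator_one ((hI i).inter (hI j))

end LayerCake

section Zigzag

lemma mul_le_mul_of_add_eq_of_abs_sub_le_one {a b c d : ℤ} (h : a + b = c + d)
    (hcd : |c - d| ≤ 1) : a * b ≤ c * d := by
  -- `4ab = (a + b)² - (a - b)²`, and `a - b ≡ c - d (mod 2)`.
  have hsq : (c - d) ^ 2 ≤ (a - b) ^ 2 := by
    obtain ⟨hcd₁, hcd₂⟩ := abs_le.mp hcd
    rcases (by omega : c - d = 0 ∨ a - b ≠ 0) with h0 | hne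
    · rw [h0]; positivity
    · exact (sq_le_one_iff_abs_le_one _).2 hcd |>.trans
        (one_le_sq_iff_one_le_abs _ |>.2 (Int.one_le_abs hne))
  have hb : b = c + d - a := by omega
  subst hb
  nlinarith

lemma abs_sum_Icc_neg_one_pow_le_one {a b : ℕ} (hab : a ≤ b) :
    |∑ m ∈ Icc a b, (-1 : ℤ) ^ m| ≤ 1 := by
  rw [← Ico_add_one_right_eq_Icc, sum_Ico_eq_sub _ (by omega), neg_one_geom_sum,
    neg_one_geom_sum]
  split_ifs <;> norm_num

variable {N : ℕ}

lemma abs_card_filter_zigzag_sub_le_one {P : Fin N → Prop} [DecidablePred P]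
    (hP : {i | P i}.OrdConnected) :
    |(#{i ∈ zigzag N | P i} : ℤ) - #{i ∈ (zigzag N)ᶜ | P i}| ≤ 1 := by
  set S : Finset (Fin N) := {i | P i}
  have hsign : (#{i ∈ zigzag N | P i} : ℤ) - #{i ∈ (zigzag N)ᶜ | P i}
      = ∑ i ∈ S, (-1 : ℤ) ^ (i : ℕ) := by
    have heven : {i ∈ S | i ∈ zigzag N} = {i ∈ zigzag N | P i} := by
      ext; simp [S, and_comm]
    have hodd : {i ∈ S | i ∉ zigzag N} = {i ∈ (zigzag N)ᶜ | P i} := by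
      ext; simp [S, and_comm]
    rw [← sum_filter_add_sum_filter_not S (· ∈ zigzag N), heven, hodd,
      sum_congr rfl (g := fun _ => 1) fun i hi => Even.neg_one_pow ?_,
      sum_congr rfl (g := fun _ => -1) fun i hi => Odd.neg_one_pow ?_]
    · simp [sub_eq_add_neg]
    · simp only [zigzag, mem_filter, mem_compl, mem_univ, true_and] at hi
      exact Nat.odd_iff.2 (by omega)
    · simp only [zigzag, mem_filter, mem_univ, true_and] at hi
      exact Nat.even_iff.2 hi.1
  rw [hsign]
  rcases S.eq_empty_or_nonempty with hS | hS
  · simp [hS]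
  have hIcc : S = Icc (S.min' hS) (S.max' hS) := by
    ext k
    refine ⟨fun hk => mem_Icc.2 ⟨S.min'_le k hk, S.le_max' k hk⟩, fun hk => ?_⟩
    have := hP.out (by simpa [S] using S.min'_mem hS) (by simpa [S] using S.max'_mem hS)
      (mem_Icc.1 hk)
    simpa [S] using this
  have := abs_sum_Icc_neg_one_pow_le_one (S.min'_le _ (S.max'_mem hS))
  rwa [← Fin.map_valEmbedding_Icc, sum_map, ← hIcc] at this

lemma card_filter_mul_card_filter_compl_le_zigzag {P : Fin N → Prop} [DecidablePred P]
    (hP : {i | P i}.OrdConnected) (A : Finset (Fin N)) :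
    #{i ∈ A | P i} * #{i ∈ Aᶜ | P i} ≤ #{i ∈ zigzag N | P i} * #{i ∈ (zigzag N)ᶜ | P i} := by
  have hsplit : ∀ B : Finset (Fin N), #{i ∈ B | P i} + #{i ∈ Bᶜ | P i} = #{i | P i} := by
    intro B
    rw [← card_union_of_disjoint (disjoint_filter_filter disjoint_compl_right), ← filter_union,
      union_compl]
  have hsum : (#{i ∈ A | P i} : ℤ) + #{i ∈ Aᶜ | P i}
      = #{i ∈ zigzag N | P i} + #{i ∈ (zigzag N)ᶜ | P i} := by
    exact_mod_cast (hsplit A).trans (hsplit (zigzag N)).symm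
  exact_mod_cast mul_le_mul_of_add_eq_of_abs_sub_le_one hsum (abs_card_filter_zigzag_sub_le_one hP)

end Zigzag

section WeightInterval

open MeasureTheory

variable {N : ℕ}

abbrev weightInterval (q : Fin N → ℝ) (p : ℝ) (i : Fin N) : Set ℝ :=
  Set.Icc (p * q i) ((1 - p) * q i)

lemma wt_eq_volume_real_inter {q : Fin N → ℝ} {p : ℝ} (hp0 : 0 ≤ p) (hp1 : p ≤ 1) (i j : Fin N) :
    wt N q p i j = volume.real (weightInterval q p i ∩ weightInterval q p j) := by
  rw [weightInterval, weightInterval, Set.Icc_inter_Icc, Real.volume_real_Icc, wt, max_comm,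
    mul_min_of_nonneg _ _ (sub_nonneg.2 hp1), mul_max_of_nonneg _ _ hp0]

lemma cut_eq_integral {q : Fin N → ℝ} {p : ℝ} (hp0 : 0 ≤ p) (hp1 : p ≤ 1) (A : Finset (Fin N)) :
    cut N q p A = ∫ x, (#{i ∈ A | x ∈ weightInterval q p i} *
      #{j ∈ Aᶜ | x ∈ weightInterval q p j} : ℝ) := by
  rw [integral_card_filter_mul_card_filter (fun _ => measurableSet_Icc)
    (fun _ => measure_Icc_lt_top.ne)]
  simp only [cut, wt_eq_volume_real_inter hp0 hp1]

lemma ordConnected_setOf_mem_weightInterval {q : Fin N → ℝ} (hq : Antitone q) {p : ℝ}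
    (hp0 : 0 ≤ p) (hp1 : p ≤ 1) (x : ℝ) : {i | x ∈ weightInterval q p i}.OrdConnected :=
  ⟨fun _ hi _ hj _ hk => ⟨(mul_le_mul_of_nonneg_left (hq hk.1) hp0).trans hi.1,
    hj.2.trans (mul_le_mul_of_nonneg_left (hq hk.2) (sub_nonneg.2 hp1))⟩⟩

lemma cut_le_cut_zigzag {q : Fin N → ℝ} (hq : Antitone q) {p : ℝ} (hp0 : 0 ≤ p) (hp1 : p ≤ 1)
    (A : Finset (Fin N)) : cut N q p A ≤ cut N q p (zigzag N) := by
  have hint := integrable_card_filter_mul_card_filter (μ := volume)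
    (I := weightInterval q p) (fun _ => measurableSet_Icc) (fun _ => measure_Icc_lt_top.ne)
  rw [cut_eq_integral hp0 hp1, cut_eq_integral hp0 hp1]
  refine integral_mono (hint _ _) (hint _ _) fun x => ?_
  exact_mod_cast card_filter_mul_card_filter_compl_le_zigzag
    (ordConnected_setOf_mem_weightInterval hq hp0 hp1 x) A

end WeightInterval

theorem stmt_0_general (N : ℕ) (q : Fin N → ℝ)
    (hnn : ∀ i, 0 ≤ q i)
    (hsort : ∀ i j : Fin N, i ≤ j → q j ≤ q i)
    (p : ℝ) (hp0 : 0 ≤ p) (hp : p ≤ 1 / 2) :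
    guessA N q p (zigzag N) ≤ guessOpt N q p + (1 / 4) * (1 - 2 * p) := by
  have hzigzag : guessA N q p (zigzag N) ≤ guessOpt N q p := by
    refine le_inf' _ _ fun A _ => ?_
    rw [guessA_eq hnn hp0 hp, guessA_eq hnn hp0 hp]
    linarith [cut_le_cut_zigzag (fun i j => hsort i j) hp0 (by linarith) A]
  linarith

theorem stmt_0 (N : ℕ) (hN : 1 ≤ N) (q : Fin N → ℝ)
    (hnn : ∀ i, 0 ≤ q i) (hsum : ∑ i, q i = 1)
    (hsort : ∀ i j : Fin N, i ≤ j → q j ≤ q i)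
    (p : ℝ) (hp0 : 0 ≤ p) (hp : p ≤ 1 / 2) :
    guessA N q p (zigzag N) ≤ guessOpt N q p + (1 / 4) * (1 - 2 * p) :=
  stmt_0_general N q hnn hsort p hp0 hp
end

section
/- Let p = (p_1,…,p_N) be a probability vector and let M be an N×N doubly stochastic matrix, and set q = M·p (so q is the distribution of X' obtained from X through a doubly stochastic transition matrix). Then the guessing time of p is at most the guessing time of q: min over permutations σ of Σ_{k=1}^N k·p_{σ(k)} ≤ min over permutations σ of Σ_{k=1}^N k·q_{σ(k)}. -/
open Finset

theorem stmt_1 (N : ℕ) (pv : Fin N → ℝ)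
    (hnn : ∀ i, 0 ≤ pv i) (hsum : ∑ i, pv i = 1)
    (M : Matrix (Fin N) (Fin N) ℝ)
    (hMnn : ∀ i j, 0 ≤ M i j)
    (hrow : ∀ i, ∑ j, M i j = 1) (hcol : ∀ j, ∑ i, M i j = 1) :
    guess N pv ≤ guess N (M.mulVec pv) := by
  apply Finset.le_inf'
  intro τ _
  have hM : M ∈ doublyStochastic ℝ (Fin N) :=
    mem_doublyStochastic_iff_sum.2 ⟨hMnn, hrow, hcol⟩
  obtain ⟨w, hw0, hw1, hwM⟩ := exists_eq_sum_perm_of_mem_doublyStochastic hM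
  have key : ∀ i, M.mulVec pv i = ∑ σ : Equiv.Perm (Fin N), w σ * pv (σ i) := by
    intro i
    rw [← hwM]
    simp only [Matrix.mulVec, dotProduct, Finset.sum_apply, Matrix.sum_apply,
      Matrix.smul_apply, smul_eq_mul, Finset.sum_mul]
    rw [Finset.sum_comm]
    refine Finset.sum_congr rfl fun σ _ => ?_
    simp [Equiv.Perm.permMatrix, PEquiv.toMatrix_apply, Equiv.toPEquiv_apply,
      mul_ite, ite_mul, Finset.sum_ite_eq, eq_comm]
  calc guess N pv = ∑ σ : Equiv.Perm (Fin N), w σ * guess N pv := by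
        rw [← Finset.sum_mul, hw1, one_mul]
    _ ≤ ∑ σ : Equiv.Perm (Fin N), w σ * ∑ k : Fin N, ((k : ℝ) + 1) * pv (σ (τ k)) := by
        refine Finset.sum_le_sum fun σ _ => mul_le_mul_of_nonneg_left ?_ (hw0 σ)
        exact Finset.inf'_le _ (Finset.mem_univ (τ.trans σ))
    _ = ∑ k : Fin N, ((k : ℝ) + 1) * M.mulVec pv (τ k) := by
        simp_rw [Finset.mul_sum]
        rw [Finset.sum_comm]
        refine Finset.sum_congr rfl fun k _ => ?_
        rw [key, Finset.mul_sum]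
        refine Finset.sum_congr rfl fun σ _ => by ring
end

section
/- (Massey's bound) Let p = (p_1,…,p_N) be a probability vector with Shannon entropy H = −Σ_{k : p_k > 0} p_k·log₂ p_k satisfying H ≥ 2. Then the guessing time satisfies G ≥ 2^H/4 + 1. -/
open Finset

open Real

/-! For a fixed guessing order `σ` put `q = p ∘ σ`, so that `G = μ + 1` with `μ = ∑ k k q k`.
Gibbs' inequality against the geometric distribution `(1 - t) t^k` bounds the entropy in nats by
`-log (1 - t) - μ log t`. At `t = 1/2` this reads `H ≤ μ + 1` in bits, so `μ ≥ 1`; at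
`t = μ / (μ + 1)` it reads `log μ + (μ + 1) log (1 + 1/μ)`, and by concavity of `log` the second
term is at most `2 log 2` once `μ ≥ 1`. Hence `2^H ≤ 4 μ = 4 (G - 1)`. -/

lemma negMulLog_le_sub_sub_mul_log {x y : ℝ} (hx : 0 ≤ x) (hy : 0 < y) :
    negMulLog x ≤ y - x - x * log y := by
  rcases hx.eq_or_lt with rfl | hx
  · simpa using hy.le
  have h := mul_le_mul_of_nonneg_left (log_le_sub_one_of_pos (div_pos hy hx)) hx.le
  rw [log_div hy.ne' hx.ne', mul_sub, mul_sub, mul_one, mul_div_cancel₀ _ hx.ne'] at h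
  rw [negMulLog]
  linarith

lemma sum_negMulLog_le_neg_sum_mul_log {ι : Type*} (s : Finset ι) {q r : ι → ℝ}
    (hq : ∀ i ∈ s, 0 ≤ q i) (hq1 : ∑ i ∈ s, q i = 1) (hr : ∀ i ∈ s, 0 < r i)
    (hr1 : ∑ i ∈ s, r i ≤ 1) :
    ∑ i ∈ s, negMulLog (q i) ≤ -∑ i ∈ s, q i * log (r i) := by
  calc ∑ i ∈ s, negMulLog (q i) ≤ ∑ i ∈ s, (r i - q i - q i * log (r i)) :=
        sum_le_sum fun i hi => negMulLog_le_sub_sub_mul_log (hq i hi) (hr i hi)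
    _ ≤ -∑ i ∈ s, q i * log (r i) := by
        rw [sum_sub_distrib, sum_sub_distrib, hq1]
        linarith

lemma sum_negMulLog_le_of_geometric {N : ℕ} {q : Fin N → ℝ} (hq : ∀ k, 0 ≤ q k)
    (hq1 : ∑ k, q k = 1) {t : ℝ} (ht0 : 0 < t) (ht1 : t < 1) :
    ∑ k, negMulLog (q k) ≤ -log (1 - t) - log t * ∑ k : Fin N, (k : ℝ) * q k := by
  have hgeom : ∑ k : Fin N, (1 - t) * t ^ (k : ℕ) ≤ 1 := by
    rw [Fin.sum_univ_eq_sum_range (fun i => (1 - t) * t ^ i), ← mul_sum, mul_neg_geom_sum]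
    linarith [pow_nonneg ht0.le N]
  calc ∑ k, negMulLog (q k) ≤ -∑ k, q k * log ((1 - t) * t ^ (k : ℕ)) :=
        sum_negMulLog_le_neg_sum_mul_log _ (fun k _ => hq k) hq1
          (fun k _ => mul_pos (by linarith) (pow_pos ht0 _)) hgeom
    _ = -log (1 - t) - log t * ∑ k : Fin N, (k : ℝ) * q k := by
        have hterm : ∀ k : Fin N, q k * log ((1 - t) * t ^ (k : ℕ)) =
            q k * log (1 - t) + log t * ((k : ℝ) * q k) := fun k => by
          rw [log_mul (by linarith) (pow_ne_zero _ ht0.ne'), log_pow]; ring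
        rw [sum_congr rfl fun k _ => hterm k, sum_add_distrib, ← sum_mul, hq1, ← mul_sum]
        ring

lemma add_one_mul_log_add_one_div_le {μ : ℝ} (hμ : 1 ≤ μ) :
    (μ + 1) * log ((μ + 1) / μ) ≤ 2 * log 2 := by
  have hconc := strictConcaveOn_log_Ioi.concaveOn.2 (Set.mem_Ioi.2 one_pos)
    (Set.mem_Ioi.2 (by norm_num : (0 : ℝ) < 1 / 2)) (by positivity : 0 ≤ (μ - 1) / (μ + 1))
    (by positivity : 0 ≤ 2 / (μ + 1))
    (by rw [← add_div, div_eq_one_iff_eq (by positivity)]; ring)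
  have hmid : ((μ - 1) / (μ + 1)) • (1 : ℝ) + (2 / (μ + 1)) • (1 / 2 : ℝ) = μ / (μ + 1) := by
    simp only [smul_eq_mul]; field_simp; ring
  rw [hmid, smul_eq_mul, smul_eq_mul, log_one, mul_zero, zero_add, one_div, log_inv,
    log_div (by positivity) (by positivity)] at hconc
  rw [log_div (by positivity) (by positivity)]
  have h := mul_le_mul_of_nonneg_left hconc (by positivity : 0 ≤ μ + 1)
  field_simp at h
  linarith

lemma exp_sum_negMulLog_le {N : ℕ} {q : Fin N → ℝ} (hq : ∀ k, 0 ≤ q k) (hq1 : ∑ k, q k = 1)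
    (hent : 2 * log 2 ≤ ∑ k, negMulLog (q k)) :
    exp (∑ k, negMulLog (q k)) ≤ 4 * ∑ k : Fin N, (k : ℝ) * q k := by
  set μ := ∑ k : Fin N, (k : ℝ) * q k
  have hlog2 : 0 < log 2 := log_pos one_lt_two
  have hμ : 1 ≤ μ := by
    have h := sum_negMulLog_le_of_geometric hq hq1 (t := 1 / 2) (by norm_num) (by norm_num)
    rw [show (1 : ℝ) - 1 / 2 = 1 / 2 by norm_num, one_div, log_inv] at h
    nlinarith
  have hμ0 : 0 < μ := by linarith
  -- the geometric distribution whose mean index is `μ`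
  have h := sum_negMulLog_le_of_geometric hq hq1 (t := μ / (μ + 1)) (by positivity)
    ((div_lt_one (by positivity)).2 (by linarith))
  rw [show 1 - μ / (μ + 1) = 1 / (μ + 1) by field_simp; ring, one_div, log_inv,
    log_div hμ0.ne' (by positivity)] at h
  have hsplit : log (μ + 1) - (log μ - log (μ + 1)) * μ =
      log μ + (μ + 1) * log ((μ + 1) / μ) := by
    rw [log_div (by positivity) hμ0.ne']; ring
  calc exp (∑ k, negMulLog (q k)) ≤ exp (log μ + 2 * log 2) := by
        gcongr
        linarith [add_one_mul_log_add_one_div_le hμ]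
    _ = 4 * μ := by
        rw [exp_add, exp_log hμ0, ← log_rpow two_pos, exp_log (by positivity)]
        norm_num [mul_comm]

lemma neg_sum_filter_mul_logb_two {ι : Type*} [Fintype ι] {p : ι → ℝ} (hp : ∀ i, 0 ≤ p i) :
    -∑ i ∈ univ.filter (fun i => 0 < p i), p i * logb 2 (p i) =
      (∑ i, negMulLog (p i)) / log 2 := by
  rw [sum_filter_of_ne fun i _ hi => (hp i).lt_of_ne fun h => hi (by simp [← h]),
    neg_eq_neg_one_mul, mul_sum, sum_div]
  simp only [negMulLog, logb]
  exact sum_congr rfl fun i _ => by ring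

theorem stmt_3 (N : ℕ) (pv : Fin N → ℝ)
    (hnn : ∀ i, 0 ≤ pv i) (hsum : ∑ i, pv i = 1)
    (H : ℝ)
    (hH : H = -∑ k ∈ Finset.univ.filter (fun k => 0 < pv k), pv k * Real.logb 2 (pv k))
    (hH2 : 2 ≤ H) :
    (2 : ℝ) ^ H / 4 + 1 ≤ guess N pv := by
  refine le_inf' _ _ fun σ _ => ?_
  set q : Fin N → ℝ := fun k => pv (σ k)
  have hq1 : ∑ k, q k = 1 := (Equiv.sum_comp σ pv).trans hsum
  have hent : H * log 2 = ∑ k, negMulLog (q k) := by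
    rw [hH, neg_sum_filter_mul_logb_two hnn, div_mul_cancel₀ _ (log_pos one_lt_two).ne',
      Equiv.sum_comp σ fun i => negMulLog (pv i)]
  have hent2 : 2 * log 2 ≤ ∑ k, negMulLog (q k) :=
    hent ▸ mul_le_mul_of_nonneg_right hH2 (log_pos one_lt_two).le
  calc (2 : ℝ) ^ H / 4 + 1 = exp (∑ k, negMulLog (q k)) / 4 + 1 := by
        rw [rpow_def_of_pos two_pos, mul_comm, hent]
    _ ≤ ∑ k : Fin N, (k : ℝ) * q k + 1 := by
        linarith [exp_sum_negMulLog_le (fun k => hnn (σ k)) hq1 hent2]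
    _ = ∑ k : Fin N, ((k : ℝ) + 1) * pv (σ k) := by
        simp only [add_mul, one_mul, sum_add_distrib, hq1, q]
end

section
/- In the noiseless case p = 0, for every sorted probability distribution p_1 ≥ ⋯ ≥ p_N ≥ 0 the optimal one-query guessing time is G_opt(X) = (1/2)·(G(X) + Σ_{i=1}^{⌈N/2⌉} p_{2i−1}). -/
/-!
With no lies, the answer to the query `A` reveals whether `X ∈ A`, after which one guesses
optimally inside `A` or inside `Aᶜ`: the query costs `guess (𝟙_A q) + guess (𝟙_{Aᶜ} q)`.
The two resulting orders use every position `k` at most twice, so by the rearrangement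
inequality the value of (0-based) rank `i` costs at least `⌊i/2⌋ + 1` guesses. The alternating
query `A = {0, 2, 4, …}` attains this bound, and `⌊i/2⌋ + 1 = ((i + 1) + [i even]) / 2`.
-/

open Finset

section Guess

variable {N : ℕ}

theorem guess_le (f : Fin N → ℝ) (σ : Equiv.Perm (Fin N)) :
    guess N f ≤ ∑ k : Fin N, ((k : ℝ) + 1) * f (σ k) :=
  inf'_le _ (mem_univ σ)

theorem exists_guess_eq_sum_symm (f : Fin N → ℝ) :
    ∃ σ : Equiv.Perm (Fin N), guess N f = ∑ i, (((σ.symm i : ℕ) : ℝ) + 1) * f i := by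
  obtain ⟨σ, -, hσ⟩ := exists_mem_eq_inf' (⟨1, mem_univ 1⟩ : (univ : Finset _).Nonempty)
    (fun σ : Equiv.Perm (Fin N) => ∑ k : Fin N, ((k : ℝ) + 1) * f (σ k))
  refine ⟨σ, hσ.trans ?_⟩
  rw [← Equiv.sum_comp σ (fun i => (((σ.symm i : ℕ) : ℝ) + 1) * f i)]
  simp

theorem guess_eq_of_antitone {q : Fin N → ℝ} (hq : Antitone q) :
    guess N q = ∑ k : Fin N, ((k : ℝ) + 1) * q k := by
  refine le_antisymm (by simpa using guess_le q 1) (le_inf' _ _ fun σ _ => ?_)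
  have hanti : Antivary (fun k : Fin N => (k : ℝ) + 1) q :=
    Monotone.antivary (fun _ _ h => by simpa using h) hq
  exact hanti.sum_mul_le_sum_mul_comp_perm

theorem guessA_zero (q : Fin N → ℝ) (A : Finset (Fin N)) :
    guessA N q 0 A =
      guess N ((A : Set (Fin N)).indicator q) + guess N ((A : Set (Fin N))ᶜ.indicator q) := by
  rw [guessA, Fintype.sum_bool]
  congr 1 <;>
  · refine congrArg _ (funext fun σ => sum_congr rfl fun k _ => ?_)
    by_cases hk : σ k ∈ A <;> simp [hk]

end Guess

section LowerBound

variable {N : ℕ}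

theorem card_filter_val_symm_lt_le (σ : Equiv.Perm (Fin N)) (v : ℕ) :
    #{i | (σ.symm i : ℕ) < v} ≤ v := by
  simpa using card_le_card_of_injOn (fun i => (σ.symm i : ℕ)) (t := range v)
    (fun i hi => by simpa using hi) (fun a _ b _ h => σ.symm.injective (Fin.val_injective h))

/-- If at most `d * v` of the weights `c i` are `≤ v`, then the `j`-th smallest weight is at
least `⌊j / d⌋ + 1`; pairing it with the `j`-th largest `q j` is the cheapest arrangement. -/
theorem sum_div_add_one_mul_le_sum_mul {q : Fin N → ℝ} (hq : Antitone q)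
    (hq0 : ∀ i, 0 ≤ q i) (d : ℕ) (c : Fin N → ℕ) (hc : ∀ v, #{i | c i ≤ v} ≤ d * v) :
    ∑ j : Fin N, (((j : ℕ) / d : ℕ) + 1 : ℝ) * q j ≤ ∑ i, (c i : ℝ) * q i := by
  set τ := Tuple.sort c
  have hsorted : ∀ j : Fin N, (j : ℕ) / d + 1 ≤ c (τ j) := by
    intro j
    have hsub : (Iic j).map τ.toEmbedding ⊆ ({i | c i ≤ c (τ j)} : Finset (Fin N)) := by
      intro i hi
      obtain ⟨k, hk, rfl⟩ := mem_map.mp hi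
      simpa using Tuple.monotone_sort c (mem_Iic.mp hk)
    have hcard := (card_le_card hsub).trans (hc _)
    rw [card_map, Fin.card_Iic] at hcard
    exact Nat.div_lt_of_lt_mul hcard
  have hanti : Antivary (fun j => (c (τ j) : ℝ)) q :=
    Monotone.antivary (fun _ _ h => Nat.cast_le.mpr (Tuple.monotone_sort c h)) hq
  calc ∑ j : Fin N, (((j : ℕ) / d : ℕ) + 1 : ℝ) * q j
      ≤ ∑ j, (c (τ j) : ℝ) * q j :=
        sum_le_sum fun j _ => mul_le_mul_of_nonneg_right (by exact_mod_cast hsorted j) (hq0 j)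
    _ ≤ ∑ j, (c (τ (τ.symm j)) : ℝ) * q j := hanti.sum_mul_le_sum_comp_perm_mul
    _ = ∑ i, (c i : ℝ) * q i := by simp

theorem sum_div_two_add_one_mul_le_guessA_zero {q : Fin N → ℝ} (hq : Antitone q)
    (hq0 : ∀ i, 0 ≤ q i) (A : Finset (Fin N)) :
    ∑ i : Fin N, (((i : ℕ) / 2 : ℕ) + 1 : ℝ) * q i ≤ guessA N q 0 A := by
  obtain ⟨σ, hσ⟩ := exists_guess_eq_sum_symm ((A : Set (Fin N)).indicator q)
  obtain ⟨τ, hτ⟩ := exists_guess_eq_sum_symm ((A : Set (Fin N))ᶜ.indicator q)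
  set c : Fin N → ℕ := fun i => (if i ∈ A then (σ.symm i : ℕ) else τ.symm i) + 1
  have hcost : guessA N q 0 A = ∑ i, (c i : ℝ) * q i := by
    rw [guessA_zero, hσ, hτ, ← sum_add_distrib]
    refine sum_congr rfl fun i _ => ?_
    by_cases hi : i ∈ A <;> simp [c, hi]
  have hc : ∀ v, #{i | c i ≤ v} ≤ 2 * v := fun v =>
    calc #{i | c i ≤ v}
        ≤ #(({i | (σ.symm i : ℕ) < v} : Finset (Fin N)) ∪
            ({i | (τ.symm i : ℕ) < v} : Finset (Fin N))) := by
          refine card_le_card fun i hi => ?_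
          by_cases hiA : i ∈ A <;> simp_all [c]
      _ ≤ v + v := (card_union_le _ _).trans
          (add_le_add (card_filter_val_symm_lt_le σ v) (card_filter_val_symm_lt_le τ v))
      _ = 2 * v := (two_mul v).symm
  rw [hcost]
  exact sum_div_add_one_mul_le_sum_mul hq hq0 2 c hc

end LowerBound

section UpperBound

def parityClass (N : ℕ) (r : Fin 2) : Set (Fin N) := {i | (i : ℕ) % 2 = r}

/-- Lists `r, r + 2, r + 4, …` and then the indices of the other parity in increasing order. -/
def parityFirst (N : ℕ) (r : Fin 2) (k : Fin N) : Fin N :=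
  if h : (k : ℕ) < (N + 1 - r) / 2 then ⟨2 * k + r, by omega⟩
  else ⟨2 * (k - (N + 1 - r) / 2) + (1 - r), by have := k.isLt; omega⟩

variable {N : ℕ}

theorem parityFirst_injective (r : Fin 2) : Function.Injective (parityFirst N r) := by
  intro a b hab
  unfold parityFirst at hab
  split_ifs at hab <;> simp only [Fin.mk.injEq] at hab <;> exact Fin.ext (by omega)

theorem parityFirst_div_two {r : Fin 2} {k : Fin N} (hk : (parityFirst N r k : ℕ) % 2 = r) :
    (parityFirst N r k : ℕ) / 2 = k := by
  unfold parityFirst at hk ⊢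
  split_ifs at hk ⊢ <;> simp only at hk ⊢ <;> omega

theorem guess_indicator_parityClass_le (r : Fin 2) (f : Fin N → ℝ) :
    guess N ((parityClass N r).indicator f) ≤
      ∑ i : Fin N, (((i : ℕ) / 2 : ℕ) + 1 : ℝ) * (parityClass N r).indicator f i := by
  let σ := Equiv.ofBijective _ (parityFirst_injective (N := N) r).bijective_of_finite
  refine (guess_le _ σ).trans_eq (Fintype.sum_bijective σ σ.bijective _ _ fun k => ?_)
  rw [show σ k = parityFirst N r k from rfl]
  by_cases hk : (parityFirst N r k : ℕ) % 2 = r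
  · rw [parityFirst_div_two hk]
  · simp [parityClass, hk]

theorem guessOpt_zero_le (q : Fin N → ℝ) :
    guessOpt N q 0 ≤ ∑ i : Fin N, (((i : ℕ) / 2 : ℕ) + 1 : ℝ) * q i := by
  have hz : (zigzag N : Set (Fin N)) = parityClass N 0 := by
    ext; simp [zigzag, parityClass]
  have hzc : (zigzag N : Set (Fin N))ᶜ = parityClass N 1 := by
    ext; simp [zigzag, parityClass]
  calc guessOpt N q 0 ≤ guessA N q 0 (zigzag N) := inf'_le _ (mem_univ _)
    _ = guess N ((parityClass N 0).indicator q) + guess N ((parityClass N 1).indicator q) := by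
        rw [guessA_zero, hzc, hz]
    _ ≤ ∑ i : Fin N, (((i : ℕ) / 2 : ℕ) + 1 : ℝ) * (parityClass N 0).indicator q i
          + ∑ i : Fin N, (((i : ℕ) / 2 : ℕ) + 1 : ℝ) * (parityClass N 1).indicator q i :=
        add_le_add (guess_indicator_parityClass_le 0 q) (guess_indicator_parityClass_le 1 q)
    _ = ∑ i : Fin N, (((i : ℕ) / 2 : ℕ) + 1 : ℝ) * q i := by
        rw [← hz, ← hzc]
        simp_rw [← sum_add_distrib, ← mul_add, Set.indicator_self_add_compl_apply]

end UpperBound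

theorem cast_div_two_add_one_eq (n : ℕ) :
    ((n / 2 : ℕ) + 1 : ℝ) = (1 / 2) * ((n + 1) + if n % 2 = 0 then 1 else 0) := by
  obtain ⟨m, rfl | rfl⟩ := Nat.even_or_odd' n
  · rw [if_pos (by omega), show 2 * m / 2 = m by omega]; push_cast; ring
  · rw [if_neg (by omega), show (2 * m + 1) / 2 = m by omega]; push_cast; ring

theorem stmt_4_general (N : ℕ) (q : Fin N → ℝ)
    (hnn : ∀ i, 0 ≤ q i)
    (hsort : ∀ i j : Fin N, i ≤ j → q j ≤ q i) :
    guessOpt N q 0 =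
      (1 / 2) * (guess N q + ∑ k ∈ Finset.univ.filter (fun k : Fin N => (k : ℕ) % 2 = 0), q k) := by
  have hq : Antitone q := hsort
  have hopt : guessOpt N q 0 = ∑ i : Fin N, (((i : ℕ) / 2 : ℕ) + 1 : ℝ) * q i :=
    le_antisymm (guessOpt_zero_le q)
      (le_inf' _ _ fun A _ => sum_div_two_add_one_mul_le_guessA_zero hq hnn A)
  rw [hopt, guess_eq_of_antitone hq, sum_filter, ← sum_add_distrib, mul_sum]
  refine sum_congr rfl fun i _ => ?_
  rw [cast_div_two_add_one_eq]
  split_ifs <;> ring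

theorem stmt_4 (N : ℕ) (hN : 1 ≤ N) (q : Fin N → ℝ)
    (hnn : ∀ i, 0 ≤ q i) (hsum : ∑ i, q i = 1)
    (hsort : ∀ i j : Fin N, i ≤ j → q j ≤ q i) :
    guessOpt N q 0 =
      (1 / 2) * (guess N q + ∑ k ∈ Finset.univ.filter (fun k : Fin N => (k : ℕ) % 2 = 0), q k) :=
  stmt_4_general N q hnn hsort
end

section
/- In the noiseless case p = 0, for every sorted probability distribution p_1 ≥ ⋯ ≥ p_N ≥ 0 the optimal one-query guessing time satisfies G(X)/2 + 1/4 ≤ G_opt(X) ≤ G(X)/2 + 1/2. -/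
open Finset

/-!
With `p = 0` the answer to the query `A` tells whether `X ∈ A`, and the guesser then runs through
`A` or through `Aᶜ` in some order. Whatever the two orders, each position is used by at most two
indices, so sorting the positions (rearrangement inequality) bounds `G_A` below by
`∑ᵢ (⌊i/2⌋ + 1) qᵢ` (indices from `0`). Querying the even indices attains this value, and it
equals `G/2 + E/2`, where `E`, the mass of the even indices, lies in `[1/2, 1]` because `q` is
antitone.
-/

section Rearrangement

variable {N : ℕ} {q : Fin N → ℝ}

theorem guess_eq_sum_of_antitone (hq : Antitone q) :
    guess N q = ∑ k : Fin N, ((k : ℝ) + 1) * q k := by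
  have hmono : Monotone fun k : Fin N => (k : ℝ) + 1 :=
    (Nat.mono_cast.comp Fin.val_strictMono.monotone).add_const 1
  refine le_antisymm (inf'_le _ (mem_univ 1)) (le_inf' _ _ fun σ _ => ?_)
  exact (hmono.antivary hq).sum_mul_le_sum_mul_comp_perm

/-- Sort `c` increasingly: by rearrangement this can only decrease `∑ c i * q i`, and the
counting hypothesis forces the `i`-th smallest value of `c` to exceed `i / k`. -/
theorem sum_div_add_one_mul_le_of_card_le (k : ℕ) (hq : Antitone q) (hq0 : ∀ i, 0 ≤ q i)
    {c : Fin N → ℕ} (hc : ∀ t, #{i | c i ≤ t} ≤ k * t) :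
    ∑ i : Fin N, (((i : ℕ) / k + 1 : ℕ) : ℝ) * q i ≤ ∑ i : Fin N, (c i : ℝ) * q i := by
  set π := Tuple.sort c
  have hsorted : Monotone (c ∘ π) := Tuple.monotone_sort c
  have hbound : ∀ i : Fin N, (i : ℕ) / k + 1 ≤ c (π i) := by
    intro i
    by_contra! hlt
    have hsub : Iic i ⊆ ({j | c (π j) ≤ (i : ℕ) / k} : Finset (Fin N)) := fun j hj => by
      simpa using (hsorted (mem_Iic.mp hj)).trans (Nat.le_of_lt_succ hlt)
    have hcard : #{j | c (π j) ≤ (i : ℕ) / k} = #{j | c j ≤ (i : ℕ) / k} :=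
      card_equiv π fun j => by simp
    have hle := card_le_card hsub
    rw [Fin.card_Iic, hcard] at hle
    have hct := hc ((i : ℕ) / k)
    have hdiv := Nat.mul_div_le (i : ℕ) k
    omega
  calc ∑ i : Fin N, (((i : ℕ) / k + 1 : ℕ) : ℝ) * q i
      ≤ ∑ i, (c (π i) : ℝ) * q i :=
        sum_le_sum fun i _ => mul_le_mul_of_nonneg_right (by exact_mod_cast hbound i) (hq0 i)
    _ ≤ ∑ i, (c (π i) : ℝ) * q (π i) :=
        ((Nat.mono_cast.comp hsorted).antivary hq).sum_mul_le_sum_mul_comp_perm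
    _ = ∑ i, (c i : ℝ) * q i := Equiv.sum_comp π fun i => (c i : ℝ) * q i

theorem sum_compl_zigzag_le_sum_zigzag (hq : Antitone q) (hq0 : ∀ i, 0 ≤ q i) :
    ∑ i ∈ (zigzag N)ᶜ, q i ≤ ∑ i ∈ zigzag N, q i := by
  set pred : Fin N → Fin N := fun i => ⟨(i : ℕ) - 1, by omega⟩
  have hinj : Set.InjOn pred ((zigzag N)ᶜ : Finset (Fin N)) := fun i hi j hj hij => by
    simp only [coe_compl, zigzag, coe_filter, mem_univ, true_and, Set.mem_compl_iff,
      Set.mem_ofPred_eq, pred, Fin.mk.injEq] at hi hj hij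
    omega
  calc ∑ i ∈ (zigzag N)ᶜ, q i
      ≤ ∑ i ∈ (zigzag N)ᶜ, q (pred i) :=
        sum_le_sum fun i _ => hq (Fin.le_iff_val_le_val.mpr (Nat.sub_le _ _))
    _ = ∑ j ∈ image pred (zigzag N)ᶜ, q j := (sum_image hinj).symm
    _ ≤ ∑ i ∈ zigzag N, q i := by
        refine sum_le_sum_of_subset_of_nonneg (fun j hj => ?_) fun j _ _ => hq0 j
        obtain ⟨i, hi, rfl⟩ := mem_image.mp hj
        simp only [zigzag, mem_compl, mem_filter, mem_univ, true_and, pred] at hi ⊢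
        omega

theorem sum_half_add_one_mul_eq (q : Fin N → ℝ) :
    ∑ i : Fin N, (((i : ℕ) / 2 + 1 : ℕ) : ℝ) * q i
      = (∑ i : Fin N, ((i : ℝ) + 1) * q i) / 2 + (∑ i ∈ zigzag N, q i) / 2 := by
  rw [zigzag, sum_filter, sum_div, sum_div, ← sum_add_distrib]
  refine sum_congr rfl fun i _ => ?_
  have hcast : (i : ℝ) = 2 * (((i : ℕ) / 2 : ℕ) : ℝ) + (((i : ℕ) % 2 : ℕ) : ℝ) := by
    exact_mod_cast (Nat.div_add_mod (i : ℕ) 2).symm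
  rcases Nat.mod_two_eq_zero_or_one (i : ℕ) with h | h <;>
  · simp only [hcast, h, if_true, one_ne_zero, if_false]
    push_cast
    ring

end Rearrangement

section NoiselessQuery

variable {N : ℕ} {q : Fin N → ℝ}

/-- After the answer `y`, the index `i` is guessed at the (`0`-based) position `(σ y).symm i`. -/
theorem sum_guessA_zero_branches_eq (A : Finset (Fin N)) (σ : Bool → Equiv.Perm (Fin N)) :
    ∑ y : Bool, ∑ k : Fin N,
        ((k : ℝ) + 1) * q (σ y k) * (if ((σ y k ∈ A) ↔ (y = true)) then 1 - 0 else 0)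
      = ∑ i : Fin N, (((σ (decide (i ∈ A))).symm i : ℝ) + 1) * q i := by
  have hbranch : ∀ y, ∑ k : Fin N,
      ((k : ℝ) + 1) * q (σ y k) * (if ((σ y k ∈ A) ↔ (y = true)) then 1 - 0 else 0)
        = ∑ i : Fin N, if decide (i ∈ A) = y then (((σ y).symm i : ℝ) + 1) * q i else 0 := by
    intro y
    refine (sum_congr rfl fun k _ => ?_).trans (Equiv.sum_comp (σ y) _)
    by_cases hk : σ y k ∈ A <;> cases y <;> simp [hk]
  simp only [hbranch]
  rw [sum_comm]
  exact sum_congr rfl fun i _ => by simp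

theorem guessA_zero_le (A : Finset (Fin N)) (σ : Bool → Equiv.Perm (Fin N)) :
    guessA N q 0 A ≤ ∑ i : Fin N, (((σ (decide (i ∈ A))).symm i : ℝ) + 1) * q i :=
  (sum_le_sum fun y _ => inf'_le _ (mem_univ (σ y))).trans_eq (sum_guessA_zero_branches_eq A σ)

theorem exists_guessA_zero_eq (A : Finset (Fin N)) : ∃ σ : Bool → Equiv.Perm (Fin N),
    guessA N q 0 A = ∑ i : Fin N, (((σ (decide (i ∈ A))).symm i : ℝ) + 1) * q i := by
  choose σ _ hσ using fun y : Bool =>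
    exists_mem_eq_inf' univ_nonempty fun τ : Equiv.Perm (Fin N) => ∑ k : Fin N, ((k : ℝ) + 1) * q (τ k) * (if ((τ k ∈ A) ↔ (y = true)) then 1 - 0 else 0)
  exact ⟨σ, (sum_congr rfl fun y _ => hσ y).trans (sum_guessA_zero_branches_eq A σ)⟩

theorem card_filter_rank_le (A : Finset (Fin N)) (σ : Bool → Equiv.Perm (Fin N)) (t : ℕ) :
    #{i | ((σ (decide (i ∈ A))).symm i : ℕ) + 1 ≤ t} ≤ 2 * t := by
  have hlevel : ∀ y, #{i | ((σ y).symm i : ℕ) < t} ≤ t := fun y => by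
    rw [card_equiv (σ y).symm (t := {j : Fin N | j < t}) fun i => by simp, Fin.card_filter_val_lt]
    exact min_le_right N t
  calc #{i | ((σ (decide (i ∈ A))).symm i : ℕ) + 1 ≤ t}
      ≤ #(univ.biUnion fun y => {i | ((σ y).symm i : ℕ) < t}) :=
        card_le_card fun i hi => mem_biUnion.mpr ⟨_, mem_univ _, by simpa using hi⟩
    _ ≤ ∑ y : Bool, #{i | ((σ y).symm i : ℕ) < t} := card_biUnion_le
    _ ≤ 2 * t := by
        simpa [Fintype.sum_bool, two_mul] using add_le_add (hlevel true) (hlevel false)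

theorem sum_half_add_one_mul_le_guessA_zero (hq : Antitone q) (hq0 : ∀ i, 0 ≤ q i)
    (A : Finset (Fin N)) :
    ∑ i : Fin N, (((i : ℕ) / 2 + 1 : ℕ) : ℝ) * q i ≤ guessA N q 0 A := by
  obtain ⟨σ, hσ⟩ := exists_guessA_zero_eq (q := q) A
  rw [hσ]
  exact_mod_cast sum_div_add_one_mul_le_of_card_le 2 hq hq0 (card_filter_rank_le A σ)

end NoiselessQuery

/-- Ranks the indices of parity `b` (`true` for even) first, in increasing order, then the
others. -/
noncomputable def halfRank (N : ℕ) (b : Bool) : Equiv.Perm (Fin N) :=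
  Equiv.ofBijective
    (fun i => if h : decide ((i : ℕ) % 2 = 0) = b then ⟨i / 2, by omega⟩
      else ⟨(N + b.toNat) / 2 + i / 2, by cases b <;> simp at h <;> simp <;> omega⟩)
    (Finite.injective_iff_bijective.mp fun i j hij => by
      have hi := i.isLt
      have hj := j.isLt
      ext
      cases b <;> split_ifs at hij with h₁ h₂ h₂ <;> simp at h₁ h₂ hij <;> omega)

theorem halfRank_decide_apply {N : ℕ} (i : Fin N) :
    (halfRank N (decide ((i : ℕ) % 2 = 0)) i : ℕ) = (i : ℕ) / 2 := by
  simp [halfRank]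

theorem guessA_zero_zigzag_le {N : ℕ} (q : Fin N → ℝ) :
    guessA N q 0 (zigzag N) ≤ ∑ i : Fin N, (((i : ℕ) / 2 + 1 : ℕ) : ℝ) * q i := by
  refine (guessA_zero_le (zigzag N) fun b => (halfRank N b).symm).trans_eq
    (sum_congr rfl fun i _ => ?_)
  simp [zigzag, halfRank_decide_apply]

theorem stmt_5_general (N : ℕ) (q : Fin N → ℝ)
    (hnn : ∀ i, 0 ≤ q i) (hsum : ∑ i, q i = 1)
    (hsort : ∀ i j : Fin N, i ≤ j → q j ≤ q i) :
    guess N q / 2 + 1 / 4 ≤ guessOpt N q 0 ∧ guessOpt N q 0 ≤ guess N q / 2 + 1 / 2 := by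
  have hq : Antitone q := hsort
  have hhalf := sum_half_add_one_mul_eq q
  rw [← guess_eq_sum_of_antitone hq] at hhalf
  have hsplit := sum_add_sum_compl (zigzag N) q
  have heven_ge := sum_compl_zigzag_le_sum_zigzag hq hnn
  have hodd_nonneg : 0 ≤ ∑ i ∈ (zigzag N)ᶜ, q i := sum_nonneg fun i _ => hnn i
  constructor
  · refine le_inf' _ _ fun A _ => ?_
    linarith [sum_half_add_one_mul_le_guessA_zero hq hnn A]
  · have hopt : guessOpt N q 0 ≤ guessA N q 0 (zigzag N) := inf'_le _ (mem_univ _)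
    linarith [guessA_zero_zigzag_le q]

theorem stmt_5 (N : ℕ) (hN : 1 ≤ N) (q : Fin N → ℝ)
    (hnn : ∀ i, 0 ≤ q i) (hsum : ∑ i, q i = 1)
    (hsort : ∀ i j : Fin N, i ≤ j → q j ≤ q i) :
    guess N q / 2 + 1 / 4 ≤ guessOpt N q 0 ∧ guessOpt N q 0 ≤ guess N q / 2 + 1 / 2 :=
  stmt_5_general N q hnn hsum hsort
end

section
/- For every sorted probability distribution p_1 ≥ ⋯ ≥ p_N ≥ 0, every lying probability 0 ≤ p ≤ 1/2, and every subset A ⊆ {1,…,N}: G_A(X) = G(X) − CUT_A(G_X). -/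
open Finset

lemma same_pair (a b p : ℝ) (hp0 : 0 ≤ p) (hp1 : p ≤ 1) :
    min (a*(1-p)) (b*(1-p)) + min (a*p) (b*p) = min a b := by
  rcases le_total a b with h | h <;>
    simp [min_def] <;> split_ifs <;> nlinarith

lemma cross_le (a b p : ℝ) (ha : 0 ≤ a) (hab : a ≤ b) (hp0 : 0 ≤ p) (hp : p ≤ 1/2) :
    min (a*(1-p)) (b*p) + min (a*p) (b*(1-p)) = a - max 0 ((1-p)*a - p*b) := by
  have h1 : min (a*p) (b*(1-p)) = a*p := min_eq_left (by nlinarith)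
  rcases le_total (a*(1-p)) (b*p) with h2 | h2
  · rw [min_eq_left h2, max_eq_left (by nlinarith : (1-p)*a - p*b ≤ 0), h1]; ring
  · rw [min_eq_right h2, max_eq_right (by nlinarith : 0 ≤ (1-p)*a - p*b), h1]; ring

lemma cross_pair (a b p : ℝ) (ha : 0 ≤ a) (hb : 0 ≤ b) (hp0 : 0 ≤ p) (hp : p ≤ 1/2) :
    min (a*(1-p)) (b*p) + min (a*p) (b*(1-p))
      = min a b - max 0 ((1-p) * min a b - p * max a b) := by
  rcases le_total a b with h | h
  · rw [min_eq_left h, max_eq_right h, cross_le a b p ha h hp0 hp]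
  · rw [min_eq_right h, max_eq_left h, min_comm (a*(1-p)), min_comm (a*p), add_comm,
      cross_le b a p hb h hp0 hp]


lemma pair_sum {N : ℕ} (g : Fin N → Fin N → ℝ) (hg : ∀ i j, g i j = g j i) :
    2 * ∑ k : Fin N, ∑ j ∈ Finset.Iio k, g j k
      = (∑ j : Fin N, ∑ k : Fin N, g j k) - ∑ k : Fin N, g k k := by
  have hu : ∀ k : Fin N, (Finset.Iio k) ∪ (Finset.Ici k) = Finset.univ := by
    intro k; ext j; simp [Finset.mem_Iio, Finset.mem_Ici, lt_or_ge]
  have hd : ∀ k : Fin N, Disjoint (Finset.Iio k) (Finset.Ici k) := by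
    intro k
    rw [Finset.disjoint_left]
    intro j h1 h2
    exact absurd (Finset.mem_Ici.mp h2) (not_le.mpr (Finset.mem_Iio.mp h1))
  have hsplit : ∀ k : Fin N, ∑ j : Fin N, g j k
      = (∑ j ∈ Finset.Iio k, g j k) + (g k k + ∑ j ∈ Finset.Ioi k, g j k) := by
    intro k
    rw [← hu k, Finset.sum_union (hd k), ← Finset.Ioi_insert,
      Finset.sum_insert (Finset.notMem_Ioi_self)]
  have hswap : ∑ k : Fin N, ∑ j ∈ Finset.Ioi k, g j k
      = ∑ k : Fin N, ∑ j ∈ Finset.Iio k, g j k := by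
    rw [Finset.sum_comm' (t' := Finset.univ) (s' := fun j => Finset.Iio j)
      (by intro x y; simp [Finset.mem_Ioi, Finset.mem_Iio])]
    exact Finset.sum_congr rfl fun j _ => Finset.sum_congr rfl fun k _ => hg j k
  have hc : ∑ j : Fin N, ∑ k : Fin N, g j k = ∑ k : Fin N, ∑ j : Fin N, g j k :=
    Finset.sum_comm
  rw [hc, Finset.sum_congr rfl fun k _ => hsplit k]
  rw [Finset.sum_add_distrib, Finset.sum_add_distrib, hswap]
  ring

lemma perm_decomp {N : ℕ} (x : Fin N → ℝ) (σ : Equiv.Perm (Fin N)) :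
    ∑ k : Fin N, ((k:ℝ)+1) * x (σ k)
      = (∑ i, x i) + ∑ k : Fin N, ∑ j ∈ Finset.Iio k, x (σ k) := by
  have h1 : ∀ k : Fin N, ((k:ℝ)+1) * x (σ k) = x (σ k) + ∑ j ∈ Finset.Iio k, x (σ k) := by
    intro k
    rw [Finset.sum_const, Fin.card_Iio, nsmul_eq_mul]
    ring
  rw [Finset.sum_congr rfl fun k _ => h1 k, Finset.sum_add_distrib, Equiv.sum_comp σ x]

lemma M_perm {N : ℕ} (x : Fin N → ℝ) (σ : Equiv.Perm (Fin N)) :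
    ∑ j : Fin N, ∑ k : Fin N, min (x (σ j)) (x (σ k))
      = ∑ j : Fin N, ∑ k : Fin N, min (x j) (x k) :=
  calc ∑ j : Fin N, ∑ k : Fin N, min (x (σ j)) (x (σ k))
      = ∑ j : Fin N, ∑ k : Fin N, min (x (σ j)) (x k) :=
        Finset.sum_congr rfl fun j _ => Equiv.sum_comp σ (fun k => min (x (σ j)) (x k))
    _ = ∑ j : Fin N, ∑ k : Fin N, min (x j) (x k) :=
        Equiv.sum_comp σ (fun j => ∑ k : Fin N, min (x j) (x k))

lemma inf_perm (N : ℕ) (x : Fin N → ℝ) :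
    Finset.univ.inf' ⟨1, Finset.mem_univ 1⟩
      (fun σ : Equiv.Perm (Fin N) => ∑ k : Fin N, ((k : ℝ) + 1) * x (σ k))
      = ((∑ i, x i) + ∑ i : Fin N, ∑ j : Fin N, min (x i) (x j)) / 2 := by
  apply le_antisymm
  · set τ : Equiv.Perm (Fin N) := (Fin.revPerm).trans (Tuple.sort x) with hτ
    have hanti : ∀ j k : Fin N, j ≤ k → x (τ k) ≤ x (τ j) := by
      intro j k hjk
      have h := Tuple.monotone_sort x (Fin.rev_le_rev.mpr hjk)
      simpa [hτ, Equiv.trans_apply] using h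
    have heq : ∑ k : Fin N, ((k : ℝ) + 1) * x (τ k)
        = ((∑ i, x i) + ∑ i : Fin N, ∑ j : Fin N, min (x i) (x j)) / 2 := by
      rw [perm_decomp]
      have h2 : ∀ k : Fin N, ∀ j ∈ Finset.Iio k, x (τ k) = min (x (τ j)) (x (τ k)) :=
        fun k j hj => (min_eq_right (hanti j k (le_of_lt (Finset.mem_Iio.mp hj)))).symm
      rw [Finset.sum_congr rfl fun k _ => Finset.sum_congr rfl (h2 k)]
      have hp := pair_sum (fun j k => min (x (τ j)) (x (τ k))) (fun i j => min_comm _ _)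
      have hdiag : ∑ k : Fin N, min (x (τ k)) (x (τ k)) = ∑ i, x i := by
        simp only [min_self]; exact Equiv.sum_comp τ x
      have hM := M_perm x τ
      linarith
    exact le_of_le_of_eq (Finset.inf'_le _ (Finset.mem_univ τ)) heq
  · apply Finset.le_inf'
    intro σ _
    rw [perm_decomp]
    have hmono : ∑ k : Fin N, ∑ j ∈ Finset.Iio k, min (x (σ j)) (x (σ k))
        ≤ ∑ k : Fin N, ∑ j ∈ Finset.Iio k, x (σ k) :=
      Finset.sum_le_sum fun k _ => Finset.sum_le_sum fun j _ => min_le_right _ _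
    have hp := pair_sum (fun j k => min (x (σ j)) (x (σ k))) (fun i j => min_comm _ _)
    have hdiag : ∑ k : Fin N, min (x (σ k)) (x (σ k)) = ∑ i, x i := by
      simp only [min_self]; exact Equiv.sum_comp σ x
    have hM := M_perm x σ
    linarith

theorem stmt_8 (N : ℕ) (hN : 1 ≤ N) (q : Fin N → ℝ)
    (hnn : ∀ i, 0 ≤ q i) (hsum : ∑ i, q i = 1)
    (hsort : ∀ i j : Fin N, i ≤ j → q j ≤ q i)
    (p : ℝ) (hp0 : 0 ≤ p) (hp : p ≤ 1 / 2) (A : Finset (Fin N)) :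
    guessA N q p A = guess N q - cut N q p A := by
  classical
  have hp1 : p ≤ 1 := le_trans hp (by norm_num)
  set xt : Fin N → ℝ := fun i => q i * (if i ∈ A then 1 - p else p) with hxt
  set xf : Fin N → ℝ := fun i => q i * (if i ∈ A then p else 1 - p) with hxf
  have hguess : guess N q = ((∑ i, q i) + ∑ i : Fin N, ∑ j : Fin N, min (q i) (q j)) / 2 :=
    inf_perm N q
  have hguessA : guessA N q p A
      = ((∑ i, xt i) + ∑ i : Fin N, ∑ j : Fin N, min (xt i) (xt j)) / 2
      + ((∑ i, xf i) + ∑ i : Fin N, ∑ j : Fin N, min (xf i) (xf j)) / 2 := by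
    rw [guessA, Fintype.sum_bool]
    congr 1
    · rw [← inf_perm N xt]
      congr 1
      funext σ
      refine Finset.sum_congr rfl fun k _ => ?_
      by_cases h : σ k ∈ A <;> simp [hxt, h, mul_assoc]
    · rw [← inf_perm N xf]
      congr 1
      funext σ
      refine Finset.sum_congr rfl fun k _ => ?_
      by_cases h : σ k ∈ A <;> simp [hxf, h, mul_assoc]
  have hsum1 : (∑ i, xt i) + (∑ i, xf i) = ∑ i, q i := by
    rw [← Finset.sum_add_distrib]
    refine Finset.sum_congr rfl fun i _ => ?_
    by_cases h : i ∈ A <;> simp [hxt, hxf, h] <;> ring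
  have hwts : ∀ i j, wt N q p i j = wt N q p j i := by
    intro i j
    unfold wt
    rw [min_comm (q i), max_comm (q i)]
  have hpt : ∀ i j, min (xt i) (xt j) + min (xf i) (xf j)
      = min (q i) (q j) - (if ((i ∈ A) ↔ (j ∈ A)) then 0 else wt N q p i j) := by
    intro i j
    by_cases hi : i ∈ A <;> by_cases hj : j ∈ A <;>
      simp only [hxt, hxf, hi, hj, if_true, if_false, iff_true, iff_false, wt,
        true_iff, false_iff, not_true, not_false_iff, if_neg, if_pos, not_not]
    · rw [sub_zero]; exact same_pair (q i) (q j) p hp0 hp1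
    · exact cross_pair (q i) (q j) p (hnn i) (hnn j) hp0 hp
    · rw [add_comm]; exact cross_pair (q i) (q j) p (hnn i) (hnn j) hp0 hp
    · rw [sub_zero, add_comm]; exact same_pair (q i) (q j) p hp0 hp1
  have hcut2 : (∑ i : Fin N, ∑ j : Fin N,
      (if ((i ∈ A) ↔ (j ∈ A)) then (0:ℝ) else wt N q p i j)) = 2 * cut N q p A := by
    have hinner1 : ∀ i ∈ A, (∑ j : Fin N,
        (if ((i ∈ A) ↔ (j ∈ A)) then (0:ℝ) else wt N q p i j)) = ∑ j ∈ Aᶜ, wt N q p i j := by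
      intro i hi
      rw [← Finset.sum_add_sum_compl A]
      rw [Finset.sum_eq_zero fun j hj => if_pos (iff_of_true hi hj), zero_add]
      exact Finset.sum_congr rfl fun j hj =>
        if_neg (by simp [hi, Finset.mem_compl.mp hj])
    have hinner2 : ∀ i ∈ Aᶜ, (∑ j : Fin N,
        (if ((i ∈ A) ↔ (j ∈ A)) then (0:ℝ) else wt N q p i j)) = ∑ j ∈ A, wt N q p i j := by
      intro i hi
      have hi' : i ∉ A := Finset.mem_compl.mp hi
      rw [← Finset.sum_add_sum_compl A]
      rw [Finset.sum_congr rfl fun j hj => if_neg (by simp [hi', hj])]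
      rw [Finset.sum_eq_zero fun j hj =>
        if_pos (iff_of_false hi' (Finset.mem_compl.mp hj)), add_zero]
    have h2 : ∑ i ∈ Aᶜ, ∑ j ∈ A, wt N q p i j = cut N q p A := by
      rw [Finset.sum_comm, cut]
      exact Finset.sum_congr rfl fun j _ => Finset.sum_congr rfl fun i _ => hwts i j
    rw [← Finset.sum_add_sum_compl A, Finset.sum_congr rfl hinner1,
      Finset.sum_congr rfl hinner2, h2]
    show cut N q p A + cut N q p A = 2 * cut N q p A
    ring
  have hM : (∑ i : Fin N, ∑ j : Fin N, min (xt i) (xt j))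
      + (∑ i : Fin N, ∑ j : Fin N, min (xf i) (xf j))
      = (∑ i : Fin N, ∑ j : Fin N, min (q i) (q j)) - 2 * cut N q p A := by
    rw [← hcut2, ← Finset.sum_sub_distrib, ← Finset.sum_add_distrib]
    refine Finset.sum_congr rfl fun i _ => ?_
    rw [← Finset.sum_sub_distrib, ← Finset.sum_add_distrib]
    exact Finset.sum_congr rfl fun j _ => hpt i j
  rw [hguessA, hguess]
  linarith
end

section
/- (Additivity) Let i ≤ j, k ≤ l, i ≤ l, k ≤ j be indices in {1,…,N} (two intersecting intervals [i,j] and [k,l]) such that all four weights w_{i,j}, w_{k,l}, w_{i,l}, w_{k,j} are strictly positive. Then w_{i,j} + w_{k,l} = w_{i,l} + w_{k,j}. -/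
open Finset

theorem stmt_11 (N : ℕ) (q : Fin N → ℝ)
    (hnn : ∀ i, 0 ≤ q i)
    (hsort : ∀ i j : Fin N, i ≤ j → q j ≤ q i)
    (p : ℝ) (hp0 : 0 ≤ p) (hp : p ≤ 1 / 2)
    (i j k l : Fin N) (hij : i ≤ j) (hkl : k ≤ l) (hil : i ≤ l) (hkj : k ≤ j)
    (h1 : 0 < wt N q p i j) (h2 : 0 < wt N q p k l)
    (h3 : 0 < wt N q p i l) (h4 : 0 < wt N q p k j) :
    wt N q p i j + wt N q p k l = wt N q p i l + wt N q p k j := by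
  have key : ∀ a b : Fin N, a ≤ b → 0 < wt N q p a b →
      wt N q p a b = (1 - p) * q b - p * q a := by
    intro a b hab hpos
    have hq : q b ≤ q a := hsort a b hab
    have hmin : min (q a) (q b) = q b := min_eq_right hq
    have hmax : max (q a) (q b) = q a := max_eq_left hq
    unfold wt at hpos ⊢
    rw [hmin, hmax] at hpos ⊢
    rcases max_cases (0:ℝ) ((1 - p) * q b - p * q a) with ⟨h, _⟩ | ⟨h, _⟩
    · rw [h] at hpos; exact absurd hpos (lt_irrefl 0)
    · exact h
  rw [key i j hij h1, key k l hkl h2, key i l hil h3, key k j hkj h4]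
  ring
end

section
/- The zigzag cut achieves at least half of the maximum cut: for every sorted probability distribution p_1 ≥ ⋯ ≥ p_N ≥ 0 and every 0 ≤ p ≤ 1/2, CUT_ZZ(G_X) ≥ (1/2)·MAXCUT(G_X), where CUT_ZZ is the cut weight of the zigzag partition A_ZZ = {k : k odd}. -/
open Finset

section helper
variable {α : Type*} [DecidableEq α] {s t : Finset α} {f g : α → ℝ}

lemma my_sum_le_sum_inj (e : α → α) (he : ∀ x ∈ s, e x ∈ t)
    (hinj : ∀ x ∈ s, ∀ y ∈ s, e x = e y → x = y)
    (hnn : ∀ y ∈ t, 0 ≤ g y) (hle : ∀ x ∈ s, f x ≤ g (e x)) :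
    ∑ x ∈ s, f x ≤ ∑ y ∈ t, g y := by
  calc ∑ x ∈ s, f x ≤ ∑ x ∈ s, g (e x) := Finset.sum_le_sum hle
    _ = ∑ y ∈ s.image e, g y := (Finset.sum_image hinj).symm
    _ ≤ ∑ y ∈ t, g y := by
        apply Finset.sum_le_sum_of_subset_of_nonneg
        · intro y hy
          obtain ⟨x, hx, rfl⟩ := Finset.mem_image.mp hy
          exact he x hx
        · intro y hy _; exact hnn y hy

end helper

lemma wt_nonneg (N : ℕ) (q : Fin N → ℝ) (p : ℝ) (i j : Fin N) : 0 ≤ wt N q p i j :=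
  le_max_left _ _

lemma wt_symm (N : ℕ) (q : Fin N → ℝ) (p : ℝ) (i j : Fin N) :
    wt N q p i j = wt N q p j i := by
  unfold wt; rw [min_comm (q i) (q j), max_comm (q i) (q j)]

lemma wt_mono (N : ℕ) (q : Fin N → ℝ) (p : ℝ) (hp0 : 0 ≤ p) (hp1 : p ≤ 1)
    (hsort : ∀ i j : Fin N, i ≤ j → q j ≤ q i) {i j j' : Fin N}
    (hij : i ≤ j) (hjj : j ≤ j') :
    wt N q p i j' ≤ wt N q p i j := by
  have h1 : q j' ≤ q j := hsort j j' hjj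
  have h2 : q j ≤ q i := hsort i j hij
  have h3 : q j' ≤ q i := h1.trans h2
  unfold wt
  rw [min_eq_right h3, max_eq_left h3, min_eq_right h2, max_eq_left h2]
  apply max_le_max le_rfl
  have := mul_le_mul_of_nonneg_left h1 (by linarith : (0:ℝ) ≤ 1 - p)
  linarith

theorem stmt_12 (N : ℕ) (hN : 1 ≤ N) (q : Fin N → ℝ)
    (hnn : ∀ i, 0 ≤ q i) (hsum : ∑ i, q i = 1)
    (hsort : ∀ i j : Fin N, i ≤ j → q j ≤ q i)
    (p : ℝ) (hp0 : 0 ≤ p) (hp : p ≤ 1 / 2) :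
    (1 / 2) * maxcut N q p ≤ cut N q p (zigzag N) := by
  have hp1 : p ≤ 1 := by linarith
  set W : Fin N × Fin N → ℝ := fun x => wt N q p x.1 x.2 with hW
  set U : Finset (Fin N × Fin N) :=
    Finset.univ.filter (fun x => x.1 < x.2) with hU
  -- cut of any set as a sum over ordered pairs
  have hcut_prod : ∀ A : Finset (Fin N),
      cut N q p A = ∑ x ∈ A ×ˢ Aᶜ, W x := by
    intro A
    rw [cut, ← Finset.sum_product']
  -- Step A : every cut is at most the total weight over sorted pairs
  have hA : ∀ A : Finset (Fin N), cut N q p A ≤ ∑ x ∈ U, W x := by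
    intro A
    rw [hcut_prod A]
    apply my_sum_le_sum_inj (fun x => if x.1 < x.2 then x else x.swap)
    · intro x hx
      rw [Finset.mem_product] at hx
      have hne : x.1 ≠ x.2 := by
        intro h
        have := hx.2
        rw [← h] at this
        exact (Finset.mem_compl.mp this) hx.1
      by_cases h : x.1 < x.2
      · simp [hU, h]
      · have : x.2 < x.1 := lt_of_le_of_ne (not_lt.mp h) (Ne.symm hne)
        simp [hU, h, this]
    · intro x hx y hy hexy
      rw [Finset.mem_product] at hx hy
      by_cases h1 : x.1 < x.2 <;> by_cases h2 : y.1 < y.2 <;>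
        simp only [h1, h2, if_pos, if_neg, if_true, if_false] at hexy
      · exact hexy
      · -- x = y.swap : x.1 = y.2 ∈ Aᶜ but x.1 ∈ A
        exfalso
        have : x.1 = y.2 := by rw [hexy]; rfl
        exact (Finset.mem_compl.mp (this ▸ hy.2)) hx.1
      · exfalso
        have : y.1 = x.2 := by rw [← hexy]; rfl
        exact (Finset.mem_compl.mp (this ▸ hx.2)) hy.1
      · have := congrArg Prod.swap hexy
        simpa using this
    · intro y _; exact wt_nonneg N q p y.1 y.2
    · intro x _
      by_cases h : x.1 < x.2
      · simp [h]
      · simp only [h, if_false]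
        exact le_of_eq (wt_symm N q p x.1 x.2)
  have hmax : maxcut N q p ≤ ∑ x ∈ U, W x := by
    rw [maxcut]
    exact Finset.sup'_le _ _ (fun A _ => hA A)
  -- parity predicate
  set P : Fin N × Fin N → Prop := fun x => (x.1 : ℕ) % 2 ≠ (x.2 : ℕ) % 2 with hP
  -- Step B : the zigzag cut equals the sum over sorted opposite-parity pairs
  have hB : cut N q p (zigzag N) = ∑ x ∈ U.filter P, W x := by
    rw [hcut_prod]
    refine Finset.sum_nbij' (fun x => if x.1 < x.2 then x else x.swap)
      (fun x => if (x.1 : ℕ) % 2 = 0 then x else x.swap) ?_ ?_ ?_ ?_ ?_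
    · intro x hx
      rw [Finset.mem_product] at hx
      have h1 : (x.1 : ℕ) % 2 = 0 := by
        have := hx.1; simpa [zigzag] using this
      have h2 : ¬ ((x.2 : ℕ) % 2 = 0) := by
        have := Finset.mem_compl.mp hx.2; simpa [zigzag] using this
      have hne : x.1 ≠ x.2 := by
        intro h; rw [h] at h1; exact h2 h1
      by_cases h : x.1 < x.2
      · simp only [h, if_true]
        simp only [hU, hP, Finset.mem_filter, Finset.mem_univ, true_and]
        exact ⟨h, by omega⟩
      · have hlt : x.2 < x.1 := lt_of_le_of_ne (not_lt.mp h) (Ne.symm hne)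
        simp only [h, if_false]
        simp only [hU, hP, Finset.mem_filter, Finset.mem_univ, true_and, Prod.fst_swap,
          Prod.snd_swap]
        exact ⟨hlt, by omega⟩
    · intro y hy
      simp only [hU, hP, Finset.mem_filter, Finset.mem_univ, true_and] at hy
      obtain ⟨hlt, hpar⟩ := hy
      by_cases h : (y.1 : ℕ) % 2 = 0
      · simp only [h, if_true]
        rw [Finset.mem_product]
        constructor
        · simp [zigzag, h]
        · rw [Finset.mem_compl]; simp [zigzag]; omega
      · simp only [h, if_false]
        rw [Finset.mem_product]
        constructor
        · simp only [Prod.fst_swap]; simp [zigzag]; omega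
        · simp only [Prod.snd_swap]; rw [Finset.mem_compl]; simp [zigzag]; omega
    · intro x hx
      rw [Finset.mem_product] at hx
      have h1 : (x.1 : ℕ) % 2 = 0 := by
        have := hx.1; simpa [zigzag] using this
      have h2 : ¬ ((x.2 : ℕ) % 2 = 0) := by
        have := Finset.mem_compl.mp hx.2; simpa [zigzag] using this
      by_cases h : x.1 < x.2
      · simp [h, h1]
      · simp [h, h2]
    · intro y hy
      simp only [hU, hP, Finset.mem_filter, Finset.mem_univ, true_and] at hy
      obtain ⟨hlt, hpar⟩ := hy
      by_cases h : (y.1 : ℕ) % 2 = 0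
      · simp [h, hlt]
      · simp only [h, if_false]
        have : ¬ (y.2 < y.1) := not_lt.mpr (le_of_lt hlt)
        simp [this]
    · intro x hx
      by_cases h : x.1 < x.2
      · simp [h]
      · simp only [h, if_false]
        exact wt_symm N q p x.1 x.2
  -- Step C : same-parity sorted pairs are dominated by opposite-parity ones
  have hC : ∑ x ∈ U.filter (fun x => ¬ P x), W x ≤ ∑ x ∈ U.filter P, W x := by
    apply my_sum_le_sum_inj
      (fun x => (x.1, ⟨(x.2 : ℕ) - 1, Nat.lt_of_le_of_lt (Nat.sub_le _ _) x.2.isLt⟩))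
    · intro x hx
      simp only [hU, hP, Finset.mem_filter, Finset.mem_univ, true_and, not_not] at hx
      obtain ⟨hlt, hpar⟩ := hx
      have hlt' : (x.1 : ℕ) < (x.2 : ℕ) := hlt
      simp only [hU, hP, Finset.mem_filter, Finset.mem_univ, true_and]
      constructor
      · show (x.1 : ℕ) < (x.2 : ℕ) - 1
        omega
      · show (x.1 : ℕ) % 2 ≠ ((x.2 : ℕ) - 1) % 2
        omega
    · intro x hx y hy hexy
      simp only [hU, hP, Finset.mem_filter, Finset.mem_univ, true_and, not_not] at hx hy
      rw [Prod.mk.injEq] at hexy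
      have h1 : x.1 = y.1 := hexy.1
      have h2 : ((x.2 : ℕ) - 1 : ℕ) = (y.2 : ℕ) - 1 := by
        have := hexy.2
        simpa [Fin.ext_iff] using this
      have hx2 : (x.1 : ℕ) < (x.2 : ℕ) := hx.1
      have hy2 : (y.1 : ℕ) < (y.2 : ℕ) := hy.1
      have : (x.2 : ℕ) = (y.2 : ℕ) := by omega
      exact Prod.ext h1 (Fin.ext this)
    · intro y _; exact wt_nonneg N q p y.1 y.2
    · intro x hx
      simp only [hU, hP, Finset.mem_filter, Finset.mem_univ, true_and, not_not] at hx
      have hlt : (x.1 : ℕ) < (x.2 : ℕ) := hx.1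
      apply wt_mono N q p hp0 hp1 hsort
      · show (x.1 : ℕ) ≤ (x.2 : ℕ) - 1
        omega
      · show ((x.2 : ℕ) - 1 : ℕ) ≤ (x.2 : ℕ)
        omega
  have hsplit : ∑ x ∈ U, W x =
      ∑ x ∈ U.filter P, W x + ∑ x ∈ U.filter (fun x => ¬ P x), W x :=
    (Finset.sum_filter_add_sum_filter_not U P W).symm
  have h2 : ∑ x ∈ U, W x ≤ 2 * cut N q p (zigzag N) := by
    rw [hsplit, hB]; linarith
  linarith [hmax]
end

section
/- The weight matrix W is positive semidefinite: for every sorted probability distribution p_1 ≥ ⋯ ≥ p_N ≥ 0 and every 0 ≤ p ≤ 1/2, the symmetric N×N matrix W with entries W_{i,j} = max(0, (1−p)·min(p_i,p_j) − p·max(p_i,p_j)) for i ≠ j and diagonal entries W_{i,i} = (1−2p)·p_i is positive semidefinite. -/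
open Finset

open MeasureTheory Set

theorem Real.volume_real_Icc_inter_Icc (a b c d : ℝ) :
    volume.real (Icc a b ∩ Icc c d) = max 0 (min b d - max a c) := by
  rw [Icc_inter_Icc, Real.volume_real_Icc, max_comm]

theorem stmt_14_general (N : ℕ) (q : Fin N → ℝ)
    (p : ℝ) (hp0 : 0 ≤ p) (hp : p ≤ 1 / 2) :
    (Matrix.of fun i j : Fin N =>
      max 0 ((1 - p) * min (q i) (q j) - p * max (q i) (q j))).PosSemidef := by
  have hp1 : 0 ≤ 1 - p := by linarith
  -- Overlap lengths of intervals form a Gram matrix of indicator functions in `L²`.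
  have hW : ∀ i j, max 0 ((1 - p) * min (q i) (q j) - p * max (q i) (q j)) =
      volume.real (Icc (p * q i) ((1 - p) * q i) ∩ Icc (p * q j) ((1 - p) * q j)) := by
    intro i j
    rw [Real.volume_real_Icc_inter_Icc, mul_min_of_nonneg _ _ hp1, mul_max_of_nonneg _ _ hp0]
  simp only [hW]
  exact posSemidef_matrix_measure_inter (fun _ => measurableSet_Icc)
    fun _ => measure_Icc_lt_top.ne

theorem stmt_14 (N : ℕ) (q : Fin N → ℝ)
    (hnn : ∀ i, 0 ≤ q i) (hsum : ∑ i, q i = 1)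
    (hsort : ∀ i j : Fin N, i ≤ j → q j ≤ q i)
    (p : ℝ) (hp0 : 0 ≤ p) (hp : p ≤ 1 / 2) :
    (Matrix.of fun i j : Fin N =>
      max 0 ((1 - p) * min (q i) (q j) - p * max (q i) (q j))).PosSemidef :=
  stmt_14_general N q p hp0 hp
end

section
/- Define the N×N matrix Q by q_{i,j} = w_{i,j} + w_{i+1,j+1} − w_{i,j+1} − w_{i+1,j}, where w_{k,l} is set to 0 whenever k or l lies outside {1,…,N} (this is Q = AᵀWA for the invertible matrix A with entries a_{i,j} = δ_{i,j} − δ_{i,j+1}). Then Q is diagonally dominant with nonnegative diagonal and nonpositive off-diagonal entries: q_{i,i} ≥ 0 for all i, q_{i,j} ≤ 0 for all i ≠ j, and Σ_{j=1}^N q_{i,j} ≥ 0 for all i. -/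
open Finset

/-- extension of `q` by zero -/
noncomputable def qext (N : ℕ) (q : Fin N → ℝ) (n : ℕ) : ℝ :=
  if h : n < N then q ⟨n, h⟩ else 0

lemma maxlem (x1 x2 x3 x4 : ℝ) (h31 : x3 ≤ x1) (h32 : x3 ≤ x2)
    (hsum : x1 + x2 = x3 + x4) :
    max 0 x1 + max 0 x2 ≤ max 0 x3 + max 0 x4 := by
  simp only [max_def]
  split_ifs <;> linarith

theorem stmt_15 (N : ℕ) (q : Fin N → ℝ)
    (hnn : ∀ i, 0 ≤ q i) (hsum : ∑ i, q i = 1)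
    (hsort : ∀ i j : Fin N, i ≤ j → q j ≤ q i)
    (p : ℝ) (hp0 : 0 ≤ p) (hp : p ≤ 1 / 2)
    (w : ℕ → ℕ → ℝ)
    (hw : ∀ k l : ℕ, w k l =
      if h : 1 ≤ k ∧ k ≤ N ∧ 1 ≤ l ∧ l ≤ N then
        max 0 ((1 - p) * min (q ⟨k - 1, by omega⟩) (q ⟨l - 1, by omega⟩)
          - p * max (q ⟨k - 1, by omega⟩) (q ⟨l - 1, by omega⟩))
      else 0)
    (Q : ℕ → ℕ → ℝ)
    (hQ : ∀ i j : ℕ, Q i j = w i j + w (i + 1) (j + 1) - w i (j + 1) - w (i + 1) j) :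
    (∀ i ∈ Finset.Icc 1 N, 0 ≤ Q i i) ∧
    (∀ i ∈ Finset.Icc 1 N, ∀ j ∈ Finset.Icc 1 N, i ≠ j → Q i j ≤ 0) ∧
    (∀ i ∈ Finset.Icc 1 N, 0 ≤ ∑ j ∈ Finset.Icc 1 N, Q i j) := by
  set Q' := qext N q with hQ'
  have hq0 : ∀ n, 0 ≤ Q' n := by
    intro n
    unfold Q'
    unfold qext
    split_ifs with h
    · exact hnn _
    · exact le_refl 0
  have hqmono : ∀ m n : ℕ, m ≤ n → Q' n ≤ Q' m := by
    intro m n hmn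
    unfold Q'
    unfold qext
    split_ifs with h1 h2 h2
    · exact hsort ⟨m, h2⟩ ⟨n, h1⟩ (by simpa using hmn)
    · omega
    · exact hnn _
    · exact le_refl 0
  -- key formula
  have hwW : ∀ k l : ℕ, 1 ≤ k → 1 ≤ l →
      w k l = max 0 ((1 - p) * Q' (max k l - 1) - p * Q' (min k l - 1)) := by
    intro k l hk hl
    rw [hw]
    split_ifs with h
    · obtain ⟨hk1, hkN, hl1, hlN⟩ := h
      have ek : Q' (k - 1) = q ⟨k - 1, by omega⟩ := by
        unfold Q'; unfold qext; rw [dif_pos]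
      have el : Q' (l - 1) = q ⟨l - 1, by omega⟩ := by
        unfold Q'; unfold qext; rw [dif_pos]
      rcases le_total k l with hkl | hlk
      · have hle : q ⟨l - 1, by omega⟩ ≤ q ⟨k - 1, by omega⟩ :=
          hsort _ _ (by simpa using Nat.sub_le_sub_right hkl 1)
        rw [max_eq_right hkl, min_eq_left hkl, ek, el,
          min_eq_right hle, max_eq_left hle]
      · have hle : q ⟨k - 1, by omega⟩ ≤ q ⟨l - 1, by omega⟩ :=
          hsort _ _ (by simpa using Nat.sub_le_sub_right hlk 1)
        rw [max_eq_left hlk, min_eq_right hlk, ek, el,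
          min_eq_left hle, max_eq_right hle]
    · have hout : N ≤ max k l - 1 := by omega
      have e0 : Q' (max k l - 1) = 0 := by
        unfold Q'; unfold qext; rw [dif_neg (by omega)]
      rw [e0]
      symm
      rw [max_eq_left]
      have := mul_nonneg hp0 (hq0 (min k l - 1))
      linarith
  have hwzero : ∀ k l : ℕ, N < l → w k l = 0 := by
    intro k l hl
    rw [hw, dif_neg (by omega)]
  -- diagonal entries
  have hdiag : ∀ i ∈ Finset.Icc 1 N, 0 ≤ Q i i := by
    intro i hi
    simp only [Finset.mem_Icc] at hi
    rw [hQ]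
    rw [hwW i i hi.1 hi.1, hwW (i+1) (i+1) (by omega) (by omega),
      hwW i (i+1) hi.1 (by omega), hwW (i+1) i (by omega) hi.1]
    simp only [max_self, min_self, Nat.add_sub_cancel, Nat.succ_sub_one]
    rw [max_comm (i+1) i, min_comm (i+1) i,
      max_eq_right (Nat.le_succ i), min_eq_left (Nat.le_succ i)]
    simp only [Nat.succ_sub_one, Nat.add_sub_cancel]
    set a := Q' (i - 1)
    set b := Q' i
    have hba : b ≤ a := hqmono _ _ (by omega)
    have ha : 0 ≤ a := hq0 _
    have hb : 0 ≤ b := hq0 _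
    have h1 : max 0 ((1-p)*a - p*a) = (1-p)*a - p*a := by
      rw [max_eq_right]; nlinarith
    have h2 : max 0 ((1-p)*b - p*b) = (1-p)*b - p*b := by
      rw [max_eq_right]; nlinarith
    rw [h1, h2]
    rcases le_total ((1-p)*b - p*a) 0 with hc | hc
    · rw [max_eq_left hc]; nlinarith
    · rw [max_eq_right hc]; nlinarith
  refine ⟨hdiag, ?_, ?_⟩
  · -- off-diagonal
    have key : ∀ i j : ℕ, 1 ≤ i → i < j → j ≤ N → Q i j ≤ 0 := by
      intro i j hi hij hj
      rw [hQ]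
      rw [hwW i j hi (by omega), hwW (i+1) (j+1) (by omega) (by omega),
        hwW i (j+1) hi (by omega), hwW (i+1) j (by omega) (by omega)]
      rw [max_eq_right (by omega : i ≤ j), min_eq_left (by omega : i ≤ j),
        max_eq_right (by omega : i+1 ≤ j+1), min_eq_left (by omega : i+1 ≤ j+1),
        max_eq_right (by omega : i ≤ j+1), min_eq_left (by omega : i ≤ j+1),
        max_eq_right (by omega : i+1 ≤ j), min_eq_left (by omega : i+1 ≤ j)]
      simp only [Nat.add_sub_cancel]
      set a := Q' (j - 1)
      set b := Q' j
      set c := Q' (i - 1)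
      set d := Q' i
      have hba : b ≤ a := hqmono _ _ (by omega)
      have hdc : d ≤ c := hqmono _ _ (by omega)
      have h1 : (1-p)*b ≤ (1-p)*a := by nlinarith
      have h2 : p*d ≤ p*c := by nlinarith
      have := maxlem ((1-p)*a - p*c) ((1-p)*b - p*d)
        ((1-p)*b - p*c) ((1-p)*a - p*d) (by linarith) (by linarith) (by ring)
      linarith
    have hQsym : ∀ k l : ℕ, 1 ≤ k → 1 ≤ l → Q k l = Q l k := by
      have hwsym : ∀ k l : ℕ, 1 ≤ k → 1 ≤ l → w k l = w l k := by
        intro k l hk hl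
        rw [hwW k l hk hl, hwW l k hl hk, max_comm k l, min_comm k l]
      intro k l hk hl
      rw [hQ, hQ, hwsym k l hk hl, hwsym (k+1) (l+1) (by omega) (by omega),
        hwsym k (l+1) hk (by omega), hwsym (k+1) l (by omega) hl]
      ring
    intro i hi j hj hne
    simp only [Finset.mem_Icc] at hi hj
    rcases Nat.lt_or_ge i j with h | h
    · exact key i j hi.1 h hj.2
    · have : j < i := by omega
      rw [hQsym i j hi.1 hj.1]
      exact key j i hj.1 this hi.2
  · -- row sums
    intro i hi
    simp only [Finset.mem_Icc] at hi
    have hg : ∀ j ∈ Finset.Icc 1 N, Q i j =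
        (fun j => w i j - w (i+1) j) j - (fun j => w i j - w (i+1) j) (j+1) := by
      intro j _
      simp only
      rw [hQ]; ring
    rw [Finset.sum_congr rfl hg]
    rw [← Finset.Ico_add_one_right_eq_Icc, Finset.sum_Ico_eq_sum_range]
    simp only [add_assoc]
    rw [Finset.sum_range_sub' (fun k => (fun j => w i j - w (i+1) j) (1 + k))]
    simp only [Nat.add_zero, Nat.add_sub_cancel, Nat.succ_sub_one]
    rw [hwzero i (1+N) (by omega), hwzero (i+1) (1+N) (by omega)]
    rw [hwW i 1 hi.1 le_rfl, hwW (i+1) 1 (by omega) le_rfl]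
    rw [max_eq_left hi.1, min_eq_right hi.1,
      max_eq_left (by omega : 1 ≤ i+1), min_eq_right (by omega : 1 ≤ i+1)]
    simp only [Nat.add_sub_cancel]
    have h1 : (1-p) * Q' i ≤ (1-p) * Q' (i-1) := by
      have := hqmono (i-1) i (by omega)
      nlinarith
    have := max_le_max (le_refl (0:ℝ))
      (by linarith : (1-p) * Q' i - p * Q' (1-1) ≤ (1-p) * Q' (i-1) - p * Q' (1-1))
    linarith
end
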